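/- arXiv:2411.01509 — 3 statements merged into one kernel-verified Lean document; each statement's English description precedes it below -/
import Mathlib

section
/- There do not exist non-constant rational functions f, g, h (elements of the field ℂ(X) of rational functions over ℂ) satisfying f^n + g^n + h^n = 1 for any integer n ≥ 8. -/
open Polynomial UniqueFactorizationMonoid

noncomputable section

namespace HaymanProof


/-! ### degree bound helpers -/

def Bd (p : ℂ[X]) (B : ℤ) : Prop := p = 0 ∨ (p.natDegree : ℤ) ≤ B

lemma bd_mono {p : ℂ[X]} {B B' : ℤ} (h : Bd p B) (hBB : B ≤ B') : Bd p B' := by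
  rcases h with rfl | h
  · exact Or.inl rfl
  · exact Or.inr (h.trans hBB)

lemma bd_derivative {p : ℂ[X]} {B : ℤ} (h : Bd p B) : Bd (derivative p) (B - 1) := by
  rcases h with rfl | h
  · left; simp
  · by_cases h0 : p.natDegree = 0
    · obtain ⟨a, rfl⟩ := Polynomial.natDegree_eq_zero.mp h0
      left; simp
    · right
      have h1 : 1 ≤ p.natDegree := Nat.pos_of_ne_zero h0
      have h2 := Polynomial.natDegree_derivative_le p
      have h3 : ((derivative p).natDegree : ℤ) ≤ ((p.natDegree - 1 : ℕ) : ℤ) :=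
        Nat.cast_le.mpr h2
      rw [Nat.cast_sub h1] at h3
      push_cast at h3
      linarith

lemma bd_mul {p q : ℂ[X]} {Bp Bq : ℤ} (hp : Bd p Bp) (hq : Bd q Bq) :
    Bd (p * q) (Bp + Bq) := by
  by_cases hp0 : p = 0
  · left; simp [hp0]
  by_cases hq0 : q = 0
  · left; simp [hq0]
  rcases hp with rfl | hp
  · exact absurd rfl hp0
  rcases hq with rfl | hq
  · exact absurd rfl hq0
  right
  rw [Polynomial.natDegree_mul hp0 hq0]
  push_cast
  linarith

lemma bd_add {p q : ℂ[X]} {B : ℤ} (hp : Bd p B) (hq : Bd q B) : Bd (p + q) B := by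
  rcases hp with rfl | hp
  · simpa using hq
  rcases hq with rfl | hq
  · rw [add_zero]; exact Or.inr hp
  by_cases h : p + q = 0
  · exact Or.inl h
  right
  have h1 := Polynomial.natDegree_add_le p q
  rcases max_cases p.natDegree q.natDegree with ⟨he, _⟩ | ⟨he, _⟩ <;> rw [he] at h1
  · exact le_trans (Nat.cast_le.mpr h1) hp
  · exact le_trans (Nat.cast_le.mpr h1) hq

lemma bd_neg {p : ℂ[X]} {B : ℤ} (hp : Bd p B) : Bd (-p) B := by
  rcases hp with rfl | hp
  · left; simp
  · right; rwa [Polynomial.natDegree_neg]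

lemma bd_sub {p q : ℂ[X]} {B : ℤ} (hp : Bd p B) (hq : Bd q B) : Bd (p - q) B := by
  rw [sub_eq_add_neg]; exact bd_add hp (bd_neg hq)

/-! ### the 3×3 Wronskian determinant -/

def V (A B Cc : ℂ[X]) : ℂ[X] :=
  A * wronskian (derivative B) (derivative Cc)
  - B * wronskian (derivative A) (derivative Cc)
  + Cc * wronskian (derivative A) (derivative B)

lemma V_swap₁ (A B Cc : ℂ[X]) : V (A + B + Cc) B Cc = V A B Cc := by
  simp only [V, wronskian, derivative_add]; ring

lemma V_swap₂ (A B Cc : ℂ[X]) : V A (A + B + Cc) Cc = V A B Cc := by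
  simp only [V, wronskian, derivative_add]; ring

lemma V_swap₃ (A B Cc : ℂ[X]) : V A B (A + B + Cc) = V A B Cc := by
  simp only [V, wronskian, derivative_add]; ring

lemma bd_V {A B Cc : ℂ[X]} {a b c : ℤ} (hA : Bd A a) (hB : Bd B b) (hC : Bd Cc c) :
    Bd (V A B Cc) (a + b + c - 3) := by
  have hA1 := bd_derivative hA
  have hA2 := bd_derivative hA1
  have hB1 := bd_derivative hB
  have hB2 := bd_derivative hB1
  have hC1 := bd_derivative hC
  have hC2 := bd_derivative hC1
  have w1 : Bd (wronskian (derivative B) (derivative Cc)) (b + c - 3) := by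
    unfold wronskian
    exact bd_sub (bd_mono (bd_mul hB1 hC2) (by linarith))
      (bd_mono (bd_mul hB2 hC1) (by linarith))
  have w2 : Bd (wronskian (derivative A) (derivative Cc)) (a + c - 3) := by
    unfold wronskian
    exact bd_sub (bd_mono (bd_mul hA1 hC2) (by linarith))
      (bd_mono (bd_mul hA2 hC1) (by linarith))
  have w3 : Bd (wronskian (derivative A) (derivative B)) (a + b - 3) := by
    unfold wronskian
    exact bd_sub (bd_mono (bd_mul hA1 hB2) (by linarith))
      (bd_mono (bd_mul hA2 hB1) (by linarith))
  unfold V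
  exact bd_add (bd_sub (bd_mono (bd_mul hA w1) (by linarith))
      (bd_mono (bd_mul hB w2) (by linarith)))
    (bd_mono (bd_mul hC w3) (by linarith))

lemma dvd_V {q A B Cc : ℂ[X]} {α β γ : ℕ}
    (hA0 : q ^ α ∣ A) (hA1 : q ^ α ∣ derivative A) (hA2 : q ^ α ∣ derivative (derivative A))
    (hB0 : q ^ β ∣ B) (hB1 : q ^ β ∣ derivative B) (hB2 : q ^ β ∣ derivative (derivative B))
    (hC0 : q ^ γ ∣ Cc) (hC1 : q ^ γ ∣ derivative Cc)
    (hC2 : q ^ γ ∣ derivative (derivative Cc)) :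
    q ^ (α + β + γ) ∣ V A B Cc := by
  unfold V wronskian
  apply dvd_add
  apply dvd_sub
  · have h : q ^ (α + β + γ) = q ^ α * (q ^ β * q ^ γ) := by
      rw [pow_add, pow_add, mul_assoc]
    rw [h]
    exact mul_dvd_mul hA0 (dvd_sub (mul_dvd_mul hB1 hC2) (mul_dvd_mul hB2 hC1))
  · have h : q ^ (α + β + γ) = q ^ β * (q ^ α * q ^ γ) := by
      rw [pow_add, pow_add]; ring
    rw [h]
    exact mul_dvd_mul hB0 (dvd_sub (mul_dvd_mul hA1 hC2) (mul_dvd_mul hA2 hC1))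
  · have h : q ^ (α + β + γ) = q ^ γ * (q ^ α * q ^ β) := by
      rw [pow_add, pow_add]; ring
    rw [h]
    exact mul_dvd_mul hC0 (dvd_sub (mul_dvd_mul hA1 hB2) (mul_dvd_mul hA2 hB1))




/-- K1: vanishing Wronskian of two nonzero polynomials over ℂ means they are
proportional over ℂ. -/
lemma const_of_wronskian_eq_zero {A B : ℂ[X]} (hA : A ≠ 0) (hB : B ≠ 0)
    (h : wronskian A B = 0) : ∃ α β : ℂ, α ≠ 0 ∧ β ≠ 0 ∧ C β * A = C α * B := by
  set g := gcd A B with hg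
  have hg0 : g ≠ 0 := fun h0 => hA ((gcd_eq_zero_iff A B).mp h0).1
  have hA1 : A = g * (A / g) := (EuclideanDomain.mul_div_cancel' hg0 (gcd_dvd_left A B)).symm
  have hB1 : B = g * (B / g) := (EuclideanDomain.mul_div_cancel' hg0 (gcd_dvd_right A B)).symm
  have cop : IsCoprime (A / g) (B / g) := isCoprime_div_gcd_div_gcd hB
  have hw : wronskian (A / g) (B / g) = 0 := by
    have hexp : wronskian A B = g ^ 2 * wronskian (A / g) (B / g) := by
      conv_lhs => rw [hA1, hB1]
      simp only [wronskian, derivative_mul]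
      ring
    rw [hexp] at h
    exact (mul_eq_zero.mp h).resolve_left (pow_ne_zero 2 hg0)
  obtain ⟨hdA, hdB⟩ := cop.wronskian_eq_zero_iff.mp hw
  have hA0' : A / g ≠ 0 := fun h0 => hA (by rw [hA1, h0, mul_zero])
  have hB0' : B / g ≠ 0 := fun h0 => hB (by rw [hB1, h0, mul_zero])
  obtain ⟨α, hα⟩ := Polynomial.natDegree_eq_zero.mp
    (natDegree_eq_zero_of_derivative_eq_zero hdA)
  obtain ⟨β, hβ⟩ := Polynomial.natDegree_eq_zero.mp
    (natDegree_eq_zero_of_derivative_eq_zero hdB)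
  refine ⟨α, β, ?_, ?_, ?_⟩
  · intro h0; rw [h0] at hα; exact hA0' (by simp [← hα])
  · intro h0; rw [h0] at hβ; exact hB0' (by simp [← hβ])
  · rw [hA1, hB1, ← hα, ← hβ]; ring

/-- helper: proportionality constant. -/
lemma eq_C_mul_of_wronskian_eq_zero {u d : ℂ[X]} (hd : d ≠ 0)
    (h : u * derivative d - derivative u * d = 0) : ∃ a : ℂ, u = C a * d := by
  by_cases hu : u = 0
  · exact ⟨0, by simp [hu]⟩
  · obtain ⟨s, t, hs, ht, hst⟩ := const_of_wronskian_eq_zero hu hd h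
    refine ⟨s / t, ?_⟩
    have h2 : C (t⁻¹) * (C t * u) = C (t⁻¹) * (C s * d) := by rw [hst]
    rw [← mul_assoc, ← C_mul, inv_mul_cancel₀ ht, C_1, one_mul, ← mul_assoc, ← C_mul] at h2
    have h3 : t⁻¹ * s = s / t := by field_simp
    rw [h2, h3]

/-- K2: vanishing of the 3×3 Wronskian implies ℂ-linear dependence. -/
lemma dep_of_V_eq_zero {A B Cc : ℂ[X]} (hA : A ≠ 0) (hB : B ≠ 0) (hC : Cc ≠ 0)
    (hV : V A B Cc = 0) :
    ∃ α β γ : ℂ, ¬(α = 0 ∧ β = 0 ∧ γ = 0) ∧ C α * A + C β * B + C γ * Cc = 0 := by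
  by_cases hd : wronskian A B = 0
  · obtain ⟨α, β, hα, hβ, hval⟩ := const_of_wronskian_eq_zero hA hB hd
    exact ⟨β, -α, 0, fun ⟨h1, _, _⟩ => hβ h1, by simp only [map_neg, map_zero, zero_mul, add_zero]; linear_combination hval⟩
  · set u := wronskian Cc B with hu
    set v := wronskian A Cc with hv
    set d := wronskian A B with hdd
    have id1 : u * A + v * B = d * Cc := by
      simp only [hu, hv, hdd, wronskian]; ring
    have id2 : u * derivative A + v * derivative B = d * derivative Cc := by
      simp only [hu, hv, hdd, wronskian]; ring
    have id3 : u * derivative (derivative A) + v * derivative (derivative B)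
        = d * derivative (derivative Cc) := by
      have hexp : u * derivative (derivative A) + v * derivative (derivative B)
          - d * derivative (derivative Cc) = -(V A B Cc) := by
        simp only [hu, hv, hdd, wronskian, V]; ring
      rw [hV] at hexp
      linear_combination hexp
    have star : derivative u * A + derivative v * B = derivative d * Cc := by
      have e1 := congrArg derivative id1
      simp only [derivative_add, derivative_mul] at e1
      linear_combination e1 - id2
    have starstar : derivative u * derivative A + derivative v * derivative B
        = derivative d * derivative Cc := by
      have e2 := congrArg derivative id2
      simp only [derivative_add, derivative_mul] at e2
      linear_combination e2 - id3
    have hPQ1 : (u * derivative d - derivative u * d) * A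
        + (v * derivative d - derivative v * d) * B = 0 := by
      linear_combination derivative d * id1 - d * star
    have hPQ2 : (u * derivative d - derivative u * d) * derivative A
        + (v * derivative d - derivative v * d) * derivative B = 0 := by
      linear_combination derivative d * id2 - d * starstar
    have hdval : d = A * derivative B - derivative A * B := by
      rw [hdd, wronskian]
    have hP : (u * derivative d - derivative u * d) * d = 0 := by
      linear_combination derivative B * hPQ1 - B * hPQ2
        + (u * derivative d - derivative u * d) * hdval
    have hQ : (v * derivative d - derivative v * d) * d = 0 := by
      linear_combination A * hPQ2 - derivative A * hPQ1
        + (v * derivative d - derivative v * d) * hdval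
    have hP0 : u * derivative d - derivative u * d = 0 :=
      (mul_eq_zero.mp hP).resolve_right hd
    have hQ0 : v * derivative d - derivative v * d = 0 :=
      (mul_eq_zero.mp hQ).resolve_right hd
    obtain ⟨a, hua⟩ := eq_C_mul_of_wronskian_eq_zero hd hP0
    obtain ⟨b, hvb⟩ := eq_C_mul_of_wronskian_eq_zero hd hQ0
    have hfin : d * (C a * A + C b * B + C (-1) * Cc) = 0 := by
      rw [map_neg, map_one]
      linear_combination id1 - A * hua - B * hvb -- d*(CaA + CbB - Cc) = uA+vB-dCc + ...
    have hfin0 : C a * A + C b * B + C (-1) * Cc = 0 :=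
      (mul_eq_zero.mp hfin).resolve_left hd
    exact ⟨a, b, -1, fun ⟨_, _, h1⟩ => by norm_num at h1, hfin0⟩

/-- column divisibility -/
lemma col_dvd (n : ℕ) (z : ℂ) (x : ℂ[X]) :
    ((X - C z) ^ (n * rootMultiplicity z x - 2) ∣ x ^ n)
    ∧ ((X - C z) ^ (n * rootMultiplicity z x - 2) ∣ derivative (x ^ n))
    ∧ ((X - C z) ^ (n * rootMultiplicity z x - 2) ∣ derivative (derivative (x ^ n))) := by
  have base : (X - C z) ^ (n * rootMultiplicity z x) ∣ x ^ n := by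
    have h := pow_dvd_pow_of_dvd (pow_rootMultiplicity_dvd x z) n
    rwa [← pow_mul, mul_comm] at h
  have h1 := pow_sub_one_dvd_derivative_of_pow_dvd base
  have h2 := pow_sub_one_dvd_derivative_of_pow_dvd h1
  refine ⟨(pow_dvd_pow _ (Nat.sub_le _ _)).trans base,
    (pow_dvd_pow _ (by omega)).trans h1, ?_⟩
  rwa [show n * rootMultiplicity z x - 1 - 1 = n * rootMultiplicity z x - 2 by omega] at h2

lemma sum_dvd_le {W : ℂ[X]} (hW : W ≠ 0) (R : Finset ℂ) (s : ℂ → ℕ)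
    (h : ∀ z ∈ R, (X - C z) ^ (s z) ∣ W) : ∑ z ∈ R, s z ≤ W.natDegree := by
  classical
  have h1 : ∀ z ∈ R, s z ≤ W.roots.count z := by
    intro z hz
    rw [count_roots]
    exact (le_rootMultiplicity_iff hW).mpr (h z hz)
  calc ∑ z ∈ R, s z ≤ ∑ z ∈ R, W.roots.count z := Finset.sum_le_sum h1
    _ = ∑ z ∈ R, (W.roots.filter (· ∈ R)).count z := by
        refine Finset.sum_congr rfl fun z hz => ?_
        rw [Multiset.count_filter, if_pos hz]
    _ = ∑ z ∈ (W.roots.filter (· ∈ R)).toFinset, (W.roots.filter (· ∈ R)).count z := by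
        symm
        apply Finset.sum_subset
        · intro z hz
          rw [Multiset.mem_toFinset, Multiset.mem_filter] at hz
          exact hz.2
        · intro z _ hz
          rw [Multiset.count_eq_zero]
          rwa [Multiset.mem_toFinset] at hz
    _ = Multiset.card (W.roots.filter (· ∈ R)) := Multiset.toFinset_sum_count_eq _
    _ ≤ Multiset.card W.roots := Multiset.card_le_card (Multiset.filter_le _ _)
    _ ≤ W.natDegree := W.card_roots'

lemma sum_rootMultiplicity {x : ℂ[X]} (hx : x ≠ 0) {R : Finset ℂ}
    (hsub : x.roots.toFinset ⊆ R) :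
    ∑ z ∈ R, rootMultiplicity z x = x.natDegree := by
  classical
  have h1 : ∑ z ∈ R, x.roots.count z = Multiset.card x.roots := by
    rw [← Multiset.toFinset_sum_count_eq x.roots]
    symm
    apply Finset.sum_subset hsub
    intro z _ hz
    rw [Multiset.count_eq_zero]
    rwa [Multiset.mem_toFinset] at hz
  have h2 : Multiset.card x.roots = x.natDegree :=
    (splits_iff_card_roots.mp (IsAlgClosed.splits x))
  calc ∑ z ∈ R, rootMultiplicity z x = ∑ z ∈ R, x.roots.count z := by
        refine Finset.sum_congr rfl fun z _ => ?_
        rw [count_roots]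
    _ = x.natDegree := by rw [h1, h2]

lemma sub2_ge {n : ℕ} (hn : 2 ≤ n) (m : ℕ) : (n - 2) * m ≤ n * m - 2 := by
  rcases m with _ | m
  · simp
  · obtain ⟨k, rfl⟩ : ∃ k, n = k + 2 := ⟨n - 2, by omega⟩
    apply Nat.le_sub_of_add_le
    simp only [Nat.add_sub_cancel]
    nlinarith


set_option maxHeartbeats 1000000 in
lemma counting {n : ℕ} (hn : 8 ≤ n) {a b c d : ℂ[X]}
    (ha : a ≠ 0) (hb : b ≠ 0) (hc : c ≠ 0) (hd : d ≠ 0)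
    (heq : a ^ n + b ^ n + c ^ n = d ^ n)
    (habd : ∀ z : ℂ, a.IsRoot z → b.IsRoot z → d.IsRoot z → False)
    (hacd : ∀ z : ℂ, a.IsRoot z → c.IsRoot z → d.IsRoot z → False)
    (hW : V (a ^ n) (b ^ n) (c ^ n) ≠ 0) : False := by
  classical
  have rep1 : V (d ^ n) (b ^ n) (c ^ n) = V (a ^ n) (b ^ n) (c ^ n) := by
    rw [← heq, V_swap₁]
  have rep2 : V (a ^ n) (d ^ n) (c ^ n) = V (a ^ n) (b ^ n) (c ^ n) := by
    rw [← heq, V_swap₂]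
  have rep3 : V (a ^ n) (b ^ n) (d ^ n) = V (a ^ n) (b ^ n) (c ^ n) := by
    rw [← heq, V_swap₃]
  have habcd : a * b * c * d ≠ 0 :=
    mul_ne_zero (mul_ne_zero (mul_ne_zero ha hb) hc) hd
  set R := (a * b * c * d).roots.toFinset with hR
  have hdvd : ∀ z ∈ R, (X - C z) ^
      ((n * rootMultiplicity z a - 2) + (n * rootMultiplicity z b - 2)
        + (n * rootMultiplicity z c - 2) + (n * rootMultiplicity z d - 2)) ∣
      V (a ^ n) (b ^ n) (c ^ n) := by
    intro z _
    obtain ⟨ba0, ba1, ba2⟩ := col_dvd n z a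
    obtain ⟨bb0, bb1, bb2⟩ := col_dvd n z b
    obtain ⟨bc0, bc1, bc2⟩ := col_dvd n z c
    obtain ⟨bd0, bd1, bd2⟩ := col_dvd n z d
    by_cases hmd : rootMultiplicity z d = 0
    · rw [show (n * rootMultiplicity z a - 2) + (n * rootMultiplicity z b - 2)
        + (n * rootMultiplicity z c - 2) + (n * rootMultiplicity z d - 2)
        = (n * rootMultiplicity z a - 2) + (n * rootMultiplicity z b - 2)
        + (n * rootMultiplicity z c - 2) by rw [hmd]; simp]
      exact dvd_V ba0 ba1 ba2 bb0 bb1 bb2 bc0 bc1 bc2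
    · by_cases hma : rootMultiplicity z a = 0
      · rw [show (n * rootMultiplicity z a - 2) + (n * rootMultiplicity z b - 2)
          + (n * rootMultiplicity z c - 2) + (n * rootMultiplicity z d - 2)
          = (n * rootMultiplicity z d - 2) + (n * rootMultiplicity z b - 2)
          + (n * rootMultiplicity z c - 2) by
            rw [hma]; simp
            generalize n * rootMultiplicity z b = B'
            generalize n * rootMultiplicity z c = C'
            generalize n * rootMultiplicity z d = D'
            omega, ← rep1]
        exact dvd_V bd0 bd1 bd2 bb0 bb1 bb2 bc0 bc1 bc2
      · have hrda : a.IsRoot z := (rootMultiplicity_pos ha).mp (Nat.pos_of_ne_zero hma)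
        have hrdd : d.IsRoot z := (rootMultiplicity_pos hd).mp (Nat.pos_of_ne_zero hmd)
        have hmb : rootMultiplicity z b = 0 := by
          by_contra hmb
          exact habd z hrda ((rootMultiplicity_pos hb).mp (Nat.pos_of_ne_zero hmb)) hrdd
        have hmc : rootMultiplicity z c = 0 := by
          by_contra hmc
          exact hacd z hrda ((rootMultiplicity_pos hc).mp (Nat.pos_of_ne_zero hmc)) hrdd
        rw [show (n * rootMultiplicity z a - 2) + (n * rootMultiplicity z b - 2)
          + (n * rootMultiplicity z c - 2) + (n * rootMultiplicity z d - 2)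
          = (n * rootMultiplicity z a - 2) + (n * rootMultiplicity z d - 2)
          + (n * rootMultiplicity z c - 2) by rw [hmb, hmc]; simp, ← rep2]
        exact dvd_V ba0 ba1 ba2 bd0 bd1 bd2 bc0 bc1 bc2
  have hsum := sum_dvd_le hW R _ hdvd
  -- lower bounds
  have hsubs : ∀ {x : ℂ[X]}, x ∣ a * b * c * d → x.roots.toFinset ⊆ R := by
    intro x hx
    rw [hR]
    exact Multiset.toFinset_subset.mpr
      (Multiset.subset_of_le (Polynomial.roots.le_of_dvd habcd hx))
  have hla : (n - 2) * a.natDegree ≤ ∑ z ∈ R, (n * rootMultiplicity z a - 2) := by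
    rw [← sum_rootMultiplicity ha (hsubs ⟨b * c * d, by ring⟩), Finset.mul_sum]
    exact Finset.sum_le_sum fun z _ => sub2_ge (by omega) _
  have hlb : (n - 2) * b.natDegree ≤ ∑ z ∈ R, (n * rootMultiplicity z b - 2) := by
    rw [← sum_rootMultiplicity hb (hsubs ⟨a * c * d, by ring⟩), Finset.mul_sum]
    exact Finset.sum_le_sum fun z _ => sub2_ge (by omega) _
  have hlc : (n - 2) * c.natDegree ≤ ∑ z ∈ R, (n * rootMultiplicity z c - 2) := by
    rw [← sum_rootMultiplicity hc (hsubs ⟨a * b * d, by ring⟩), Finset.mul_sum]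
    exact Finset.sum_le_sum fun z _ => sub2_ge (by omega) _
  have hld : (n - 2) * d.natDegree ≤ ∑ z ∈ R, (n * rootMultiplicity z d - 2) := by
    rw [← sum_rootMultiplicity hd (hsubs ⟨a * b * c, by ring⟩), Finset.mul_sum]
    exact Finset.sum_le_sum fun z _ => sub2_ge (by omega) _
  have hsplit : ∑ z ∈ R, ((n * rootMultiplicity z a - 2) + (n * rootMultiplicity z b - 2)
      + (n * rootMultiplicity z c - 2) + (n * rootMultiplicity z d - 2))
      = (∑ z ∈ R, (n * rootMultiplicity z a - 2)) + (∑ z ∈ R, (n * rootMultiplicity z b - 2))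
      + (∑ z ∈ R, (n * rootMultiplicity z c - 2))
      + (∑ z ∈ R, (n * rootMultiplicity z d - 2)) := by
    simp [Finset.sum_add_distrib]
  have hLB : (n - 2) * (a.natDegree + b.natDegree + c.natDegree + d.natDegree)
      ≤ (V (a ^ n) (b ^ n) (c ^ n)).natDegree := by
    calc (n - 2) * (a.natDegree + b.natDegree + c.natDegree + d.natDegree)
        = (n - 2) * a.natDegree + (n - 2) * b.natDegree + (n - 2) * c.natDegree
          + (n - 2) * d.natDegree := by ring
      _ ≤ (∑ z ∈ R, (n * rootMultiplicity z a - 2)) + (∑ z ∈ R, (n * rootMultiplicity z b - 2))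
          + (∑ z ∈ R, (n * rootMultiplicity z c - 2))
          + (∑ z ∈ R, (n * rootMultiplicity z d - 2)) :=
          add_le_add (add_le_add (add_le_add hla hlb) hlc) hld
      _ = _ := hsplit.symm
      _ ≤ _ := hsum
  -- upper bounds
  have bda : Bd (a ^ n) ((n : ℤ) * a.natDegree) :=
    Or.inr (le_of_eq (by rw [natDegree_pow]; push_cast; ring))
  have bdb : Bd (b ^ n) ((n : ℤ) * b.natDegree) :=
    Or.inr (le_of_eq (by rw [natDegree_pow]; push_cast; ring))
  have bdc : Bd (c ^ n) ((n : ℤ) * c.natDegree) :=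
    Or.inr (le_of_eq (by rw [natDegree_pow]; push_cast; ring))
  have bdd : Bd (d ^ n) ((n : ℤ) * d.natDegree) :=
    Or.inr (le_of_eq (by rw [natDegree_pow]; push_cast; ring))
  have ub0 : ((V (a ^ n) (b ^ n) (c ^ n)).natDegree : ℤ)
      ≤ (n : ℤ) * a.natDegree + (n : ℤ) * b.natDegree + (n : ℤ) * c.natDegree - 3 := by
    rcases bd_V bda bdb bdc with h0 | h
    · exact absurd h0 hW
    · linarith
  have ub1 : ((V (a ^ n) (b ^ n) (c ^ n)).natDegree : ℤ)
      ≤ (n : ℤ) * d.natDegree + (n : ℤ) * b.natDegree + (n : ℤ) * c.natDegree - 3 := by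
    rcases bd_V bdd bdb bdc with h0 | h
    · rw [rep1] at h0; exact absurd h0 hW
    · rw [rep1] at h; linarith
  have ub2 : ((V (a ^ n) (b ^ n) (c ^ n)).natDegree : ℤ)
      ≤ (n : ℤ) * a.natDegree + (n : ℤ) * d.natDegree + (n : ℤ) * c.natDegree - 3 := by
    rcases bd_V bda bdd bdc with h0 | h
    · rw [rep2] at h0; exact absurd h0 hW
    · rw [rep2] at h; linarith
  have ub3 : ((V (a ^ n) (b ^ n) (c ^ n)).natDegree : ℤ)
      ≤ (n : ℤ) * a.natDegree + (n : ℤ) * b.natDegree + (n : ℤ) * d.natDegree - 3 := by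
    rcases bd_V bda bdb bdd with h0 | h
    · rw [rep3] at h0; exact absurd h0 hW
    · rw [rep3] at h; linarith
  -- final arithmetic
  set Sa := a.natDegree
  set Sb := b.natDegree
  set Sc := c.natDegree
  set Sd := d.natDegree
  have hLBZ : ((n : ℤ) - 2) * ((Sa : ℤ) + Sb + Sc + Sd)
      ≤ ((V (a ^ n) (b ^ n) (c ^ n)).natDegree : ℤ) := by
    have h2 : ((n - 2 : ℕ) : ℤ) = (n : ℤ) - 2 := by
      rw [Nat.cast_sub (by omega)]; norm_num
    calc ((n : ℤ) - 2) * ((Sa : ℤ) + Sb + Sc + Sd)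
        = (((n - 2) * (Sa + Sb + Sc + Sd) : ℕ) : ℤ) := by push_cast [h2]; ring
      _ ≤ _ := Nat.cast_le.mpr hLB
  have hn' : (8 : ℤ) ≤ (n : ℤ) := by exact_mod_cast hn
  have hcases : (Sb ≤ Sa ∧ Sc ≤ Sa ∧ Sd ≤ Sa)
      ∨ (Sa ≤ Sb ∧ Sc ≤ Sb ∧ Sd ≤ Sb)
      ∨ (Sa ≤ Sc ∧ Sb ≤ Sc ∧ Sd ≤ Sc)
      ∨ (Sa ≤ Sd ∧ Sb ≤ Sd ∧ Sc ≤ Sd) := by omega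
  have hSa : (0 : ℤ) ≤ (Sa : ℤ) := Int.natCast_nonneg _
  have hSb : (0 : ℤ) ≤ (Sb : ℤ) := Int.natCast_nonneg _
  have hSc : (0 : ℤ) ≤ (Sc : ℤ) := Int.natCast_nonneg _
  have hSd : (0 : ℤ) ≤ (Sd : ℤ) := Int.natCast_nonneg _
  rcases hcases with ⟨h1, h2, h3⟩ | ⟨h1, h2, h3⟩ | ⟨h1, h2, h3⟩ | ⟨h1, h2, h3⟩ <;>
    replace h1 := (Nat.cast_le (α := ℤ)).mpr h1 <;>
    replace h2 := (Nat.cast_le (α := ℤ)).mpr h2 <;>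
    replace h3 := (Nat.cast_le (α := ℤ)).mpr h3
  · have h8 : (8 : ℤ) * Sa ≤ (n : ℤ) * Sa := mul_le_mul_of_nonneg_right hn' hSa
    linarith [hLBZ, ub1]
  · have h8 : (8 : ℤ) * Sb ≤ (n : ℤ) * Sb := mul_le_mul_of_nonneg_right hn' hSb
    linarith [hLBZ, ub2]
  · have h8 : (8 : ℤ) * Sc ≤ (n : ℤ) * Sc := mul_le_mul_of_nonneg_right hn' hSc
    linarith [hLBZ, ub3]
  · have h8 : (8 : ℤ) * Sd ≤ (n : ℤ) * Sd := mul_le_mul_of_nonneg_right hn' hSd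
    linarith [hLBZ, ub0]



local notation "ap" => algebraMap (Polynomial ℂ) (RatFunc ℂ)
local notation "eC" => algebraMap ℂ (RatFunc ℂ)

lemma apC (α : ℂ) : (eC) α = (ap) (C α) := by
  rw [IsScalarTower.algebraMap_apply ℂ ℂ[X] (RatFunc ℂ)]
  norm_num

lemma mul_denom (F : RatFunc ℂ) : F * (ap) F.denom = (ap) F.num := by
  have h := RatFunc.num_div_denom F
  have hq0 : (ap) F.denom ≠ 0 := RatFunc.algebraMap_ne_zero F.denom_ne_zero
  rw [div_eq_iff hq0] at h
  rw [← h]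

lemma mem_range_of_pow_eq_const {n : ℕ} (hn : 1 ≤ n) {g : RatFunc ℂ} {c : ℂ}
    (h : g ^ n = (eC) c) : g ∈ Set.range (eC) := by
  by_cases hg0 : g = 0
  · exact ⟨0, by simp [hg0]⟩
  have hq0 : (ap) g.denom ≠ 0 := RatFunc.algebraMap_ne_zero g.denom_ne_zero
  have hpoly : g.num ^ n = C c * g.denom ^ n := by
    apply RatFunc.algebraMap_injective ℂ
    rw [map_pow, map_mul, map_pow, ← mul_denom g, ← apC, mul_pow, h]
  have hdvd : g.denom ^ n ∣ g.num ^ n := ⟨C c, by rw [hpoly]; ring⟩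
  have hcop : IsCoprime (g.num ^ n) (g.denom ^ n) := (RatFunc.isCoprime_num_denom g).pow
  have hu : IsUnit (g.denom ^ n) := hcop.isUnit_of_dvd' hdvd dvd_rfl
  have hq1 : g.denom = 1 :=
    (RatFunc.monic_denom g).eq_one_of_isUnit ((isUnit_pow_iff (by omega)).mp hu)
  have hnum : g.num ^ n = C c := by rw [hpoly, hq1]; simp
  have hdeg : g.num.natDegree = 0 := by
    have h5 := congrArg natDegree hnum
    rw [natDegree_pow, natDegree_C] at h5
    rcases Nat.mul_eq_zero.mp h5 with h6 | h6
    · omega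
    · exact h6
  obtain ⟨w, hw⟩ := Polynomial.natDegree_eq_zero.mp hdeg
  refine ⟨w, ?_⟩
  rw [apC, hw, ← mul_denom g, hq1]
  simp

/-- FLT for rational functions, via Mason–Stothers. -/
lemma fltRat {n : ℕ} (hn : 3 ≤ n) {F G : RatFunc ℂ} (h : F ^ n + G ^ n = 1) :
    F ∈ Set.range (eC) := by
  by_cases hF : F = 0
  · exact ⟨0, by simp [hF]⟩
  by_cases hG : G = 0
  · apply mem_range_of_pow_eq_const (show 1 ≤ n by omega) (c := 1)
    rw [hG, zero_pow (show n ≠ 0 by omega), add_zero] at h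
    rw [map_one]
    exact h
  set x := F.num * G.denom with hx
  set y := G.num * F.denom with hy
  set z := F.denom * G.denom with hz
  have hx0 : x ≠ 0 := mul_ne_zero (RatFunc.num_ne_zero hF) G.denom_ne_zero
  have hy0 : y ≠ 0 := mul_ne_zero (RatFunc.num_ne_zero hG) F.denom_ne_zero
  have hz0 : z ≠ 0 := mul_ne_zero F.denom_ne_zero G.denom_ne_zero
  have hFz : F * (ap) z = (ap) x := by
    rw [hz, hx, map_mul, map_mul, ← mul_assoc, mul_denom F]
  have hGz : G * (ap) z = (ap) y := by
    rw [hz, hy, map_mul, map_mul, mul_comm ((ap) F.denom) ((ap) G.denom), ← mul_assoc,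
      mul_denom G, mul_comm]
  have hxyz : x ^ n + y ^ n = z ^ n := by
    apply RatFunc.algebraMap_injective ℂ
    rw [map_add, map_pow, map_pow, map_pow, ← hFz, ← hGz, mul_pow, mul_pow]
    linear_combination ((ap) z : RatFunc ℂ) ^ n * h
  -- remove common factor
  set g0 := gcd x y with hg0
  have hg00 : g0 ≠ 0 := gcd_ne_zero_of_left hx0
  have hx1 : x = g0 * (x / g0) := (EuclideanDomain.mul_div_cancel' hg00 (gcd_dvd_left x y)).symm
  have hy1 : y = g0 * (y / g0) := (EuclideanDomain.mul_div_cancel' hg00 (gcd_dvd_right x y)).symm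
  have hcop : IsCoprime (x / g0) (y / g0) := isCoprime_div_gcd_div_gcd hy0
  have hgz : g0 ∣ z := by
    rw [← IsIntegrallyClosed.pow_dvd_pow_iff (show n ≠ 0 by omega)]
    rw [← hxyz]
    exact dvd_add (pow_dvd_pow_of_dvd (gcd_dvd_left x y) n)
      (pow_dvd_pow_of_dvd (gcd_dvd_right x y) n)
  obtain ⟨z1, hz1⟩ := hgz
  set x1 := x / g0
  set y1 := y / g0
  have hx10 : x1 ≠ 0 := fun h0 => hx0 (by rw [hx1, h0, mul_zero])
  have hy10 : y1 ≠ 0 := fun h0 => hy0 (by rw [hy1, h0, mul_zero])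
  have hz10 : z1 ≠ 0 := fun h0 => hz0 (by rw [hz1, h0, mul_zero])
  have heq1 : x1 ^ n + y1 ^ n = z1 ^ n := by
    have h2 : g0 ^ n * (x1 ^ n + y1 ^ n) = g0 ^ n * z1 ^ n := by
      rw [hx1, hy1] at hxyz
      rw [hz1] at hxyz
      linear_combination hxyz
    exact mul_left_cancel₀ (pow_ne_zero n hg00) h2
  -- coprimality
  have hc1 : IsCoprime (x1 ^ n) (y1 ^ n) := hcop.pow
  have hc2 : IsCoprime (y1 ^ n) (z1 ^ n) := by
    rw [← heq1]
    simpa [mul_one] using hc1.symm.add_mul_left_right 1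
  have hc3 : IsCoprime (z1 ^ n) (x1 ^ n) := by
    rw [← heq1]
    exact (by simpa [mul_one, add_comm] using hc1.add_mul_left_right 1 :
      IsCoprime (x1 ^ n) (x1 ^ n + y1 ^ n)).symm
  have hsum0 : x1 ^ n + y1 ^ n + -(z1 ^ n) = 0 := by linear_combination heq1
  rcases Polynomial.abc (pow_ne_zero n hx10) (pow_ne_zero n hy10)
      (neg_ne_zero.mpr (pow_ne_zero n hz10)) hc1 hsum0 with
    ⟨hdeg1, hdeg2, hdeg3⟩ | ⟨hd1, hd2, hd3⟩
  · exfalso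
    have hprod : x1 ^ n * y1 ^ n * -(z1 ^ n) = -((x1 * y1 * z1) ^ n) := by ring
    rw [hprod, UniqueFactorizationDomain.radical_neg, radical_pow _ (show n ≠ 0 by omega)] at hdeg1 hdeg2 hdeg3
    have hxyz0 : x1 * y1 * z1 ≠ 0 := mul_ne_zero (mul_ne_zero hx10 hy10) hz10
    have hrad : (radical (x1 * y1 * z1)).natDegree ≤ (x1 * y1 * z1).natDegree :=
      natDegree_le_of_dvd (radical_dvd_self (a := x1 * y1 * z1)) hxyz0
    rw [natDegree_mul (mul_ne_zero hx10 hy10) hz10, natDegree_mul hx10 hy10] at hrad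
    rw [natDegree_pow] at hdeg1 hdeg2
    rw [natDegree_neg, natDegree_pow] at hdeg3
    set D1 := x1.natDegree
    set D2 := y1.natDegree
    set D3 := z1.natDegree
    have h3S : 3 * (D1 + D2 + D3) ≤ n * (D1 + D2 + D3) := Nat.mul_le_mul_right _ hn
    have e1 : n * D1 + n * D2 + n * D3 = n * (D1 + D2 + D3) := by ring
    omega
  · -- all constant: F is constant
    rw [derivative_neg, neg_eq_zero] at hd3
    have hD1 : x1.natDegree = 0 := by
      have := natDegree_eq_zero_of_derivative_eq_zero hd1
      rw [natDegree_pow] at this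
      rcases Nat.mul_eq_zero.mp this with h6 | h6
      · omega
      · exact h6
    have hD3 : z1.natDegree = 0 := by
      have := natDegree_eq_zero_of_derivative_eq_zero hd3
      rw [natDegree_pow] at this
      rcases Nat.mul_eq_zero.mp this with h6 | h6
      · omega
      · exact h6
    obtain ⟨α, hα⟩ := Polynomial.natDegree_eq_zero.mp hD1
    obtain ⟨ζ, hζ⟩ := Polynomial.natDegree_eq_zero.mp hD3
    refine ⟨α / ζ, ?_⟩
    have hFeq : F = (ap) x / (ap) z := by
      rw [eq_div_iff (RatFunc.algebraMap_ne_zero hz0), hFz]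
    symm
    rw [hFeq, hx1, hz1, ← hα, ← hζ, map_mul, map_mul, ← apC, ← apC,
      mul_div_mul_left _ _ (RatFunc.algebraMap_ne_zero hg00), ← map_div₀]

lemma no_lin_dep {n : ℕ} (hn : 3 ≤ n) {f g h : RatFunc ℂ}
    (hf : f ∉ Set.range (eC)) (hg : g ∉ Set.range (eC))
    (heq : f ^ n + g ^ n + h ^ n = 1) {α β γ : ℂ} (hγ : γ ≠ 0)
    (hdep : (eC) α * f ^ n + (eC) β * g ^ n + (eC) γ * h ^ n = 0) : False := by
  have hinj : Function.Injective (eC) := (algebraMap ℂ (RatFunc ℂ)).injective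
  have hγ' : (eC) γ ≠ 0 := fun h0 => hγ (hinj (by rw [h0, map_zero]))
  set lam := 1 - α / γ with hlam
  set mu := 1 - β / γ with hmu
  have key : (eC) lam * f ^ n + (eC) mu * g ^ n = 1 := by
    apply mul_left_cancel₀ hγ'
    have h1 : γ * lam = γ - α := by rw [hlam]; field_simp
    have h2 : γ * mu = γ - β := by rw [hmu]; field_simp
    calc (eC) γ * ((eC) lam * f ^ n + (eC) mu * g ^ n)
        = (eC) (γ * lam) * f ^ n + (eC) (γ * mu) * g ^ n := by
          rw [map_mul, map_mul]; ring
      _ = (eC) (γ - α) * f ^ n + (eC) (γ - β) * g ^ n := by rw [h1, h2]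
      _ = (eC) γ * 1 := by
          rw [map_sub, map_sub, mul_one]
          linear_combination (eC) γ * heq - hdep
  by_cases hl : lam = 0
  · by_cases hm : mu = 0
    · rw [hl, hm] at key; simp at key
    · rw [hl] at key
      simp only [map_zero, zero_mul, zero_add] at key
      have hmu' : (eC) mu ≠ 0 := fun h0 => hm (hinj (by rw [h0, map_zero]))
      have : g ^ n = (eC) (mu⁻¹) := by
        rw [map_inv₀]
        exact eq_inv_of_mul_eq_one_left (by linear_combination key)
      exact hg (mem_range_of_pow_eq_const (by omega) this)
  · by_cases hm : mu = 0
    · rw [hm] at key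
      simp only [map_zero, zero_mul, add_zero] at key
      have : f ^ n = (eC) (lam⁻¹) := by
        rw [map_inv₀]
        exact eq_inv_of_mul_eq_one_left (by linear_combination key)
      exact hf (mem_range_of_pow_eq_const (by omega) this)
    · obtain ⟨s, hs⟩ := IsAlgClosed.exists_pow_nat_eq lam (show 0 < n by omega)
      have hs0 : s ≠ 0 := fun h0 => hl (by rw [← hs, h0, zero_pow (show n ≠ 0 by omega)])
      obtain ⟨t, ht⟩ := IsAlgClosed.exists_pow_nat_eq mu (show 0 < n by omega)
      have hFG : ((eC) s * f) ^ n + ((eC) t * g) ^ n = 1 := by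
        rw [mul_pow, mul_pow, ← map_pow, ← map_pow, hs, ht]
        exact key
      obtain ⟨w, hw⟩ := fltRat hn hFG
      apply hf
      refine ⟨s⁻¹ * w, ?_⟩
      have hsne : (eC) s ≠ 0 := fun h0 => hs0 (hinj (by rw [h0, map_zero]))
      rw [map_mul, map_inv₀, hw, inv_mul_cancel_left₀ hsne]


theorem main (n : ℕ) (hn : 8 ≤ n) :
    ¬ ∃ f g h : RatFunc ℂ,
      f ∉ Set.range (algebraMap ℂ (RatFunc ℂ)) ∧
      g ∉ Set.range (algebraMap ℂ (RatFunc ℂ)) ∧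
      h ∉ Set.range (algebraMap ℂ (RatFunc ℂ)) ∧
      f ^ n + g ^ n + h ^ n = 1 := by
  rintro ⟨f, g, h, hf, hg, hh, heq⟩
  classical
  have hn3 : 3 ≤ n := by omega
  have hf0 : f ≠ 0 := fun h0 => hf ⟨0, by rw [map_zero, h0]⟩
  have hg0 : g ≠ 0 := fun h0 => hg ⟨0, by rw [map_zero, h0]⟩
  have hh0 : h ≠ 0 := fun h0 => hh ⟨0, by rw [map_zero, h0]⟩
  set a := f.num * (g.denom * h.denom) with hadef
  set b := g.num * (f.denom * h.denom) with hbdef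
  set c := h.num * (f.denom * g.denom) with hcdef
  set Δ := f.denom * (g.denom * h.denom) with hΔdef
  have ha0 : a ≠ 0 := mul_ne_zero (RatFunc.num_ne_zero hf0)
    (mul_ne_zero g.denom_ne_zero h.denom_ne_zero)
  have hb0 : b ≠ 0 := mul_ne_zero (RatFunc.num_ne_zero hg0)
    (mul_ne_zero f.denom_ne_zero h.denom_ne_zero)
  have hc0 : c ≠ 0 := mul_ne_zero (RatFunc.num_ne_zero hh0)
    (mul_ne_zero f.denom_ne_zero g.denom_ne_zero)
  have hΔ0 : Δ ≠ 0 := mul_ne_zero f.denom_ne_zero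
    (mul_ne_zero g.denom_ne_zero h.denom_ne_zero)
  have haΔ : f * (ap) Δ = (ap) a := by
    rw [hΔdef, hadef]
    simp only [map_mul]
    linear_combination ((ap) g.denom * (ap) h.denom : RatFunc ℂ) * mul_denom f
  have hbΔ : g * (ap) Δ = (ap) b := by
    rw [hΔdef, hbdef]
    simp only [map_mul]
    linear_combination ((ap) f.denom * (ap) h.denom : RatFunc ℂ) * mul_denom g
  have hcΔ : h * (ap) Δ = (ap) c := by
    rw [hΔdef, hcdef]
    simp only [map_mul]
    linear_combination ((ap) f.denom * (ap) g.denom : RatFunc ℂ) * mul_denom h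
  have heqP : a ^ n + b ^ n + c ^ n = Δ ^ n := by
    apply RatFunc.algebraMap_injective ℂ
    simp only [map_add, map_pow]
    rw [← haΔ, ← hbΔ, ← hcΔ]
    rw [mul_pow, mul_pow, mul_pow]
    linear_combination ((ap) Δ : RatFunc ℂ) ^ n * heq
  -- remove common factor
  set G := gcd (gcd a b) (gcd c Δ) with hGdef
  have hGa : G ∣ a := (gcd_dvd_left (gcd a b) (gcd c Δ)).trans (gcd_dvd_left a b)
  have hGb : G ∣ b := (gcd_dvd_left (gcd a b) (gcd c Δ)).trans (gcd_dvd_right a b)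
  have hGc : G ∣ c := (gcd_dvd_right (gcd a b) (gcd c Δ)).trans (gcd_dvd_left c Δ)
  have hGΔ : G ∣ Δ := (gcd_dvd_right (gcd a b) (gcd c Δ)).trans (gcd_dvd_right c Δ)
  obtain ⟨a', ha'⟩ := hGa
  obtain ⟨b', hb'⟩ := hGb
  obtain ⟨c', hc'⟩ := hGc
  obtain ⟨Δ', hΔ'⟩ := hGΔ
  have hG0 : G ≠ 0 := by
    intro h0
    rw [hGdef] at h0
    exact ha0 ((gcd_eq_zero_iff a b).mp ((gcd_eq_zero_iff _ _).mp h0).1).1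
  have ha'0 : a' ≠ 0 := fun h0 => ha0 (by rw [ha', h0, mul_zero])
  have hb'0 : b' ≠ 0 := fun h0 => hb0 (by rw [hb', h0, mul_zero])
  have hc'0 : c' ≠ 0 := fun h0 => hc0 (by rw [hc', h0, mul_zero])
  have hΔ'0 : Δ' ≠ 0 := fun h0 => hΔ0 (by rw [hΔ', h0, mul_zero])
  have heqP' : a' ^ n + b' ^ n + c' ^ n = Δ' ^ n := by
    rw [ha', hb', hc', hΔ'] at heqP
    have h2 : G ^ n * (a' ^ n + b' ^ n + c' ^ n) = G ^ n * Δ' ^ n := by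
      linear_combination heqP
    exact mul_left_cancel₀ (pow_ne_zero n hG0) h2
  have haf' : f * (ap) Δ' = (ap) a' := by
    apply mul_left_cancel₀ (RatFunc.algebraMap_ne_zero hG0)
    rw [ha', hΔ'] at haΔ
    simp only [map_mul] at haΔ
    linear_combination haΔ
  have hbf' : g * (ap) Δ' = (ap) b' := by
    apply mul_left_cancel₀ (RatFunc.algebraMap_ne_zero hG0)
    rw [hb', hΔ'] at hbΔ
    simp only [map_mul] at hbΔ
    linear_combination hbΔ
  have hcf' : h * (ap) Δ' = (ap) c' := by
    apply mul_left_cancel₀ (RatFunc.algebraMap_ne_zero hG0)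
    rw [hc', hΔ'] at hcΔ
    simp only [map_mul] at hcΔ
    linear_combination hcΔ
  -- no point is a root of three of them
  have hall4 : ∀ z : ℂ, (X - C z) ∣ a' → (X - C z) ∣ b' → (X - C z) ∣ c' →
      (X - C z) ∣ Δ' → False := by
    intro z d1 d2 d3 d4
    have h1 : G * (X - C z) ∣ a := by rw [ha']; exact mul_dvd_mul_left G d1
    have h2 : G * (X - C z) ∣ b := by rw [hb']; exact mul_dvd_mul_left G d2
    have h3 : G * (X - C z) ∣ c := by rw [hc']; exact mul_dvd_mul_left G d3
    have h4 : G * (X - C z) ∣ Δ := by rw [hΔ']; exact mul_dvd_mul_left G d4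
    have hdG : G * (X - C z) ∣ G := by
      rw [hGdef]
      exact dvd_gcd (dvd_gcd h1 h2) (dvd_gcd h3 h4)
    have h5 : G * (X - C z) ∣ G * 1 := by rwa [mul_one]
    exact Polynomial.not_isUnit_X_sub_C z
      (isUnit_of_dvd_one ((mul_dvd_mul_iff_left hG0).mp h5))
  have habd : ∀ z : ℂ, a'.IsRoot z → b'.IsRoot z → Δ'.IsRoot z → False := by
    intro z h1 h2 h4
    have h5 := congrArg (eval z) heqP'
    simp only [eval_add, eval_pow] at h5
    rw [show eval z a' = 0 from h1, show eval z b' = 0 from h2,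
      show eval z Δ' = 0 from h4, zero_pow (show n ≠ 0 by omega)] at h5
    have h6 : eval z c' = 0 := by
      apply pow_eq_zero_iff (show n ≠ 0 by omega) |>.mp
      linear_combination h5
    exact hall4 z (dvd_iff_isRoot.mpr h1) (dvd_iff_isRoot.mpr h2)
      (dvd_iff_isRoot.mpr h6) (dvd_iff_isRoot.mpr h4)
  have hacd : ∀ z : ℂ, a'.IsRoot z → c'.IsRoot z → Δ'.IsRoot z → False := by
    intro z h1 h3 h4
    have h5 := congrArg (eval z) heqP'
    simp only [eval_add, eval_pow] at h5
    rw [show eval z a' = 0 from h1, show eval z c' = 0 from h3,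
      show eval z Δ' = 0 from h4, zero_pow (show n ≠ 0 by omega)] at h5
    have h6 : eval z b' = 0 := by
      apply pow_eq_zero_iff (show n ≠ 0 by omega) |>.mp
      linear_combination h5
    exact hall4 z (dvd_iff_isRoot.mpr h1) (dvd_iff_isRoot.mpr h6)
      (dvd_iff_isRoot.mpr h3) (dvd_iff_isRoot.mpr h4)
  by_cases hV : V (a' ^ n) (b' ^ n) (c' ^ n) = 0
  · obtain ⟨α, β, γ, hnt, hdep⟩ := dep_of_V_eq_zero (pow_ne_zero n ha'0)
      (pow_ne_zero n hb'0) (pow_ne_zero n hc'0) hV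
    have hdepR : (eC) α * f ^ n + (eC) β * g ^ n + (eC) γ * h ^ n = 0 := by
      have h1 := congrArg (ap) hdep
      simp only [map_add, map_mul, map_pow, map_zero] at h1
      rw [← haf', ← hbf', ← hcf'] at h1
      have hΔR : ((ap) Δ' : RatFunc ℂ) ^ n ≠ 0 :=
        pow_ne_zero _ (RatFunc.algebraMap_ne_zero hΔ'0)
      have h2 : ((eC) α * f ^ n + (eC) β * g ^ n + (eC) γ * h ^ n) * ((ap) Δ') ^ n = 0 := by
        rw [apC α, apC β, apC γ]
        linear_combination h1
      exact (mul_eq_zero.mp h2).resolve_right hΔR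
    by_cases hγ : γ ≠ 0
    · exact no_lin_dep hn3 hf hg heq hγ hdepR
    · push_neg at hγ
      by_cases hβ : β ≠ 0
      · apply no_lin_dep (α := α) (β := γ) (γ := β) hn3 hf hh (show f ^ n + h ^ n + g ^ n = 1 by
          linear_combination heq) hβ
        linear_combination hdepR
      · push_neg at hβ
        have hα : α ≠ 0 := fun h0 => hnt ⟨h0, hβ, hγ⟩
        apply no_lin_dep (α := β) (β := γ) (γ := α) hn3 hg hh (show g ^ n + h ^ n + f ^ n = 1 by
          linear_combination heq) hα
        linear_combination hdepR
  · exact counting hn ha'0 hb'0 hc'0 hΔ'0 heqP' habd hacd hV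


end HaymanProof

end

/-- **Hayman (1985).** There do not exist non-constant rational functions `f, g, h`
(elements of the field `ℂ(X)` of rational functions over `ℂ`) satisfying
`f^n + g^n + h^n = 1` for any integer `n ≥ 8`. Non-constant means not lying in the
image of `ℂ` in `ℂ(X)`. -/
theorem no_nonconstant_rational_solutions_of_eight_le
    (n : ℕ) (hn : 8 ≤ n) :
    ¬ ∃ f g h : RatFunc ℂ,
      f ∉ Set.range (algebraMap ℂ (RatFunc ℂ)) ∧
      g ∉ Set.range (algebraMap ℂ (RatFunc ℂ)) ∧
      h ∉ Set.range (algebraMap ℂ (RatFunc ℂ)) ∧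
      f ^ n + g ^ n + h ^ n = 1 := by
  exact HaymanProof.main n hn
end

section
/- There do not exist non-constant polynomials f, g, h ∈ ℂ[X] satisfying f^n + g^n + h^n = 1 for any integer n ≥ 6. -/
open Polynomial

/-- If `u v' = u' v` with `u, v ≠ 0` over ℂ, then `u = C μ * v` for some `μ ≠ 0`. -/
private lemma wron_prop {u v : Polynomial ℂ} (hu : u ≠ 0) (hv : v ≠ 0)
    (h : u * derivative v = derivative u * v) : ∃ μ : ℂ, μ ≠ 0 ∧ u = C μ * v := by
  classical
  set d := GCDMonoid.gcd u v with hd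
  have hd0 : d ≠ 0 := gcd_ne_zero_of_left hu
  set p := u / d with hp
  set q := v / d with hq
  have hup : d * p = u := EuclideanDomain.mul_div_cancel' hd0 (gcd_dvd_left u v)
  have hvq : d * q = v := EuclideanDomain.mul_div_cancel' hd0 (gcd_dvd_right u v)
  have hcop : IsCoprime p q := isCoprime_div_gcd_div_gcd hv
  have hp0 : p ≠ 0 := left_div_gcd_ne_zero hu
  have hq0 : q ≠ 0 := right_div_gcd_ne_zero hv
  have h' : (d * p) * derivative (d * q) = derivative (d * p) * (d * q) := by
    rw [hup, hvq]; exact h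
  rw [derivative_mul, derivative_mul] at h'
  have key : p * derivative q = derivative p * q := by
    have h2 : d * d * (p * derivative q) = d * d * (derivative p * q) := by
      linear_combination h'
    exact mul_left_cancel₀ (mul_ne_zero hd0 hd0) h2
  have hpdvd : p ∣ derivative p := by
    have : p ∣ derivative p * q := ⟨derivative q, key.symm⟩
    exact hcop.dvd_of_dvd_mul_right this
  have hdp0 : derivative p = 0 := by
    by_contra hne
    have h1 : p.natDegree ≠ 0 := by
      intro h0
      have := eq_C_of_natDegree_eq_zero h0
      rw [this, derivative_C] at hne
      exact hne rfl
    have h2 := natDegree_derivative_lt h1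
    have h3 := natDegree_le_of_dvd hpdvd hne
    omega
  have hdq0 : derivative q = 0 := by
    have h0 : p * derivative q = 0 := by rw [key, hdp0, zero_mul]
    rcases mul_eq_zero.mp h0 with h | h
    · exact absurd h hp0
    · exact h
  obtain ⟨a, hpc⟩ : ∃ a, p = C a :=
    ⟨p.coeff 0, eq_C_of_natDegree_eq_zero (natDegree_eq_zero_of_derivative_eq_zero hdp0)⟩
  obtain ⟨b, hqc⟩ : ∃ b, q = C b :=
    ⟨q.coeff 0, eq_C_of_natDegree_eq_zero (natDegree_eq_zero_of_derivative_eq_zero hdq0)⟩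
  have ha0 : a ≠ 0 := by rintro rfl; rw [map_zero] at hpc; exact hp0 hpc
  have hb0 : b ≠ 0 := by rintro rfl; rw [map_zero] at hqc; exact hq0 hqc
  refine ⟨a / b, div_ne_zero ha0 hb0, ?_⟩
  have hcc : C (a / b) * C b = C a := by rw [← C_mul, div_mul_cancel₀ a hb0]
  rw [← hup, ← hvq, hpc, hqc, ← hcc]
  ring

/-- No solution to `C μ * u^n + v^n = C c` with `u, v` nonconstant, `μ, c ≠ 0`, `n ≥ 2`. -/
private lemma no_two_term (n : ℕ) (hn : 2 ≤ n) {u v : Polynomial ℂ}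
    (hu : 1 ≤ u.degree) (hv : 1 ≤ v.degree) {μ c : ℂ} (hμ : μ ≠ 0)
    (hc : c ≠ 0) (heq : C μ * u ^ n + v ^ n = C c) : False := by
  obtain ⟨m, rfl⟩ : ∃ m, n = m + 1 := ⟨n - 1, by omega⟩
  have hm : 1 ≤ m := by omega
  have hu0 : u ≠ 0 := fun h => by simp [h] at hu
  have hv0 : v ≠ 0 := fun h => by simp [h] at hv
  have hund : 1 ≤ u.natDegree :=
    natDegree_pos_iff_degree_pos.mpr (lt_of_lt_of_le (by norm_num) hu)
  have hvnd : 1 ≤ v.natDegree :=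
    natDegree_pos_iff_degree_pos.mpr (lt_of_lt_of_le (by norm_num) hv)
  -- coprimality
  have h1 : IsCoprime u (C c) :=
    ⟨0, C c⁻¹, by rw [zero_mul, zero_add, ← C_mul, inv_mul_cancel₀ hc, C_1]⟩
  have h2 : IsCoprime u (C c + u * (-(C μ) * u ^ m)) := h1.add_mul_left_right _
  have h3 : C c + u * (-(C μ) * u ^ m) = v ^ (m + 1) := by
    rw [← heq]; ring
  rw [h3] at h2
  have hcop : IsCoprime u v := (IsCoprime.pow_right_iff (by omega)).mp h2
  have hcopn : IsCoprime (u ^ m) (v ^ m) := hcop.pow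
  -- derivative of the equation
  have hder := congrArg derivative heq
  rw [derivative_add, derivative_mul, derivative_C, zero_mul, zero_add,
    derivative_pow, derivative_pow, derivative_C, Nat.add_sub_cancel] at hder
  have hC : (C ((m + 1 : ℕ) : ℂ)) ≠ 0 := by
    simp only [Ne, C_eq_zero, Nat.cast_eq_zero]; omega
  have hcancel1 : C ((m + 1 : ℕ) : ℂ) * (v ^ m * derivative v)
      = C ((m + 1 : ℕ) : ℂ) * (u ^ m * (-(C μ) * derivative u)) := by
    linear_combination hder
  have heq1 : v ^ m * derivative v = u ^ m * (-(C μ) * derivative u) :=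
    mul_left_cancel₀ hC hcancel1
  have hcancel2 : C ((m + 1 : ℕ) : ℂ) * (u ^ m * (C μ * derivative u))
      = C ((m + 1 : ℕ) : ℂ) * (v ^ m * (-derivative v)) := by
    linear_combination hder
  have heq2 : u ^ m * (C μ * derivative u) = v ^ m * (-derivative v) :=
    mul_left_cancel₀ hC hcancel2
  -- nonvanishing of derivatives
  have hdu : derivative u ≠ 0 := fun h => by
    have := natDegree_eq_zero_of_derivative_eq_zero h; omega
  have hdv : derivative v ≠ 0 := fun h => by
    have := natDegree_eq_zero_of_derivative_eq_zero h; omega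
  -- divisibilities
  have hdvd1' : u ^ m ∣ v ^ m * derivative v := ⟨-(C μ) * derivative u, heq1⟩
  have hdvdv : u ^ m ∣ derivative v := hcopn.dvd_of_dvd_mul_left hdvd1'
  have hdvd2' : v ^ m ∣ u ^ m * (C μ * derivative u) := ⟨-derivative v, heq2⟩
  have hdvdu : v ^ m ∣ C μ * derivative u := hcopn.symm.dvd_of_dvd_mul_left hdvd2'
  have hb1 := natDegree_le_of_dvd hdvdv hdv
  have hb2 := natDegree_le_of_dvd hdvdu (mul_ne_zero (by simp [hμ]) hdu)
  rw [natDegree_pow] at hb1 hb2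
  rw [natDegree_C_mul hμ] at hb2
  have e1 : (derivative v).natDegree < v.natDegree := natDegree_derivative_lt (by omega)
  have e2 : (derivative u).natDegree < u.natDegree := natDegree_derivative_lt (by omega)
  have l1 : u.natDegree ≤ m * u.natDegree := Nat.le_mul_of_pos_left _ (by omega)
  have l2 : v.natDegree ≤ m * v.natDegree := Nat.le_mul_of_pos_left _ (by omega)
  omega

/-- If `x*y`, `y*z`, `z*x` all divide `D` and `gcd x y` is coprime to `z`, then `x*y*z ∣ D`. -/
private lemma key_dvd {x y z D : Polynomial ℂ} (hx : x ≠ 0) (hy : y ≠ 0)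
    (hcop : IsCoprime (GCDMonoid.gcd x y) z)
    (hxy : x * y ∣ D) (hyz : y * z ∣ D) (hzx : z * x ∣ D) : x * y * z ∣ D := by
  have hzy : z * y ∣ D := by rwa [mul_comm] at hyz
  have h1 : GCDMonoid.lcm (z * x) (z * y) ∣ D := lcm_dvd hzx hzy
  rw [lcm_mul_left] at h1
  have h2 : z * GCDMonoid.lcm x y ∣ D :=
    dvd_trans (Associated.mul_right (associated_normalize z) _).dvd h1
  obtain ⟨E, hE⟩ := h2
  have hlcm0 : GCDMonoid.lcm x y ≠ 0 := fun h0 => by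
    rcases (lcm_eq_zero_iff x y).mp h0 with h' | h'
    · exact hx h'
    · exact hy h'
  have h3 : GCDMonoid.gcd x y * GCDMonoid.lcm x y ∣ D := (gcd_mul_lcm x y).dvd.trans hxy
  have h4 : GCDMonoid.gcd x y ∣ z * E := by
    rw [hE] at h3
    have h5 : GCDMonoid.lcm x y * GCDMonoid.gcd x y ∣ GCDMonoid.lcm x y * (z * E) := by
      have : z * GCDMonoid.lcm x y * E = GCDMonoid.lcm x y * (z * E) := by ring
      rw [this] at h3
      rwa [mul_comm (GCDMonoid.gcd x y)] at h3
    exact (mul_dvd_mul_iff_left hlcm0).mp h5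
  have h6 : GCDMonoid.gcd x y ∣ E := hcop.dvd_of_dvd_mul_left h4
  obtain ⟨E', rfl⟩ := h6
  have h7 : x * y * z ∣ GCDMonoid.gcd x y * GCDMonoid.lcm x y * z :=
    mul_dvd_mul_right (gcd_mul_lcm x y).symm.dvd z
  exact h7.trans ⟨E', by rw [hE]; ring⟩

/-- **Newman–Slater (1979).** There do not exist non-constant polynomials
`f, g, h ∈ ℂ[X]` satisfying `f^n + g^n + h^n = 1` for any integer `n ≥ 6`.
Non-constant means of degree at least `1`. -/
theorem no_nonconstant_polynomial_solutions_of_six_le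
    (n : ℕ) (hn : 6 ≤ n) :
    ¬ ∃ f g h : Polynomial ℂ,
      1 ≤ f.degree ∧ 1 ≤ g.degree ∧ 1 ≤ h.degree ∧
      f ^ n + g ^ n + h ^ n = 1 := by
  rintro ⟨f, g, h, hf, hg, hh, heq⟩
  obtain ⟨k, rfl⟩ : ∃ k, n = k + 2 := ⟨n - 2, by omega⟩
  have hk : 4 ≤ k := by omega
  have hf0 : f ≠ 0 := fun h0 => by simp [h0] at hf
  have hg0 : g ≠ 0 := fun h0 => by simp [h0] at hg
  have hh0 : h ≠ 0 := fun h0 => by simp [h0] at hh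
  have ha : 1 ≤ f.natDegree :=
    natDegree_pos_iff_degree_pos.mpr (lt_of_lt_of_le (by norm_num) hf)
  have hb : 1 ≤ g.natDegree :=
    natDegree_pos_iff_degree_pos.mpr (lt_of_lt_of_le (by norm_num) hg)
  have hc : 1 ≤ h.natDegree :=
    natDegree_pos_iff_degree_pos.mpr (lt_of_lt_of_le (by norm_num) hh)
  -- derivatives sum to zero
  have hsum1 : derivative (f ^ (k+2)) + derivative (g ^ (k+2)) + derivative (h ^ (k+2)) = 0 := by
    have h0 := congrArg derivative heq
    rwa [derivative_add, derivative_add, derivative_one] at h0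
  set D := wronskian (derivative (f ^ (k+2))) (derivative (g ^ (k+2))) with hDdef
  have hD2 : D = wronskian (derivative (g ^ (k+2))) (derivative (h ^ (k+2))) :=
    wronskian_eq_of_sum_zero hsum1
  have hsum2 : derivative (g ^ (k+2)) + derivative (h ^ (k+2)) + derivative (f ^ (k+2)) = 0 := by
    linear_combination hsum1
  have hD3 : D = wronskian (derivative (h ^ (k+2))) (derivative (f ^ (k+2))) := by
    rw [hD2]; exact wronskian_eq_of_sum_zero hsum2
  -- nonvanishing of derivatives of the powers
  have hndpow : ∀ (r : Polynomial ℂ), r ≠ 0 → 1 ≤ r.natDegree → (r ^ (k+2)).natDegree ≠ 0 := by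
    intro r hr0 hr1
    rw [natDegree_pow]
    positivity
  have hder_ne : ∀ (r : Polynomial ℂ), r ≠ 0 → 1 ≤ r.natDegree →
      derivative (r ^ (k+2)) ≠ 0 := by
    intro r hr0 hr1 hd0
    exact hndpow r hr0 hr1 (natDegree_eq_zero_of_derivative_eq_zero hd0)
  by_cases hD0 : D = 0
  · -- degenerate case: first derivatives proportional
    have hw : derivative (f ^ (k+2)) * derivative (derivative (g ^ (k+2)))
        = derivative (derivative (f ^ (k+2))) * derivative (g ^ (k+2)) := by
      rw [hDdef, wronskian] at hD0
      linear_combination hD0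
    obtain ⟨μ, hμ, hFG⟩ := wron_prop (hder_ne f hf0 ha) (hder_ne g hg0 hb) hw
    have hdz : derivative (f ^ (k+2) - C μ * g ^ (k+2)) = 0 := by
      rw [derivative_sub, derivative_mul, derivative_C, zero_mul, zero_add, hFG, sub_self]
    obtain ⟨c, hFGc⟩ : ∃ c, f ^ (k+2) - C μ * g ^ (k+2) = C c :=
      ⟨_, eq_C_of_natDegree_eq_zero (natDegree_eq_zero_of_derivative_eq_zero hdz)⟩
    by_cases hcz : c = 0
    · subst hcz
      rw [map_zero, sub_eq_zero] at hFGc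
      by_cases hμ1 : μ + 1 = 0
      · -- then h ^ (k+2) = 1
        have hCμ : C μ = -1 := by
          have hμ' : μ = -1 := by linear_combination hμ1
          rw [hμ', map_neg, C_1]
        have hh1 : h ^ (k+2) = 1 := by
          have heq' := heq
          rw [hFGc, hCμ] at heq'
          linear_combination heq'
        have hnd := congrArg natDegree hh1
        rw [natDegree_pow, natDegree_one] at hnd
        rcases Nat.mul_eq_zero.mp hnd with h' | h'
        · omega
        · omega
      · have h2 : C (μ + 1) * g ^ (k+2) + h ^ (k+2) = C 1 := by
          rw [map_add, C_1]
          have heq' := heq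
          rw [hFGc] at heq'
          linear_combination heq'
        exact no_two_term (k+2) (by omega) hg hh hμ1 one_ne_zero h2
    · have h2 : C (-μ) * g ^ (k+2) + f ^ (k+2) = C c := by
        rw [map_neg]
        linear_combination hFGc
      exact no_two_term (k+2) (by omega) hg hf (neg_ne_zero.mpr hμ) hcz h2
  · -- main case
    -- explicit factorization of the wronskian
    have fact : ∀ p q : Polynomial ℂ,
        wronskian (derivative (p ^ (k+2))) (derivative (q ^ (k+2)))
        = p ^ k * q ^ k * (C ((k:ℂ)+2) ^ 2 *
            (p * derivative p *
              (C ((k:ℂ)+1) * (derivative q) ^ 2 + q * derivative (derivative q))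
            - q * derivative q *
              (C ((k:ℂ)+1) * (derivative p) ^ 2 + p * derivative (derivative p)))) := by
      have e1 : ∀ r : Polynomial ℂ,
          derivative (r ^ (k+2)) = C ((k:ℂ)+2) * r ^ (k+1) * derivative r := by
        intro r
        rw [derivative_pow, show k + 2 - 1 = k + 1 from rfl]
        push_cast
        ring
      have e2 : ∀ r : Polynomial ℂ,
          derivative (derivative (r ^ (k+2)))
          = C ((k:ℂ)+2) * r ^ k *
            (C ((k:ℂ)+1) * (derivative r) ^ 2 + r * derivative (derivative r)) := by
        intro r
        rw [e1, derivative_mul, derivative_mul, derivative_C, derivative_pow,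
          show k + 1 - 1 = k from rfl]
        push_cast
        ring
      intro p q
      rw [wronskian, e2 p, e2 q, e1 p, e1 q]
      ring
    have hdvd_fg : f ^ k * g ^ k ∣ D := ⟨_, fact f g⟩
    have hdvd_gh : g ^ k * h ^ k ∣ D := by rw [hD2]; exact ⟨_, fact g h⟩
    have hdvd_hf : h ^ k * f ^ k ∣ D := by rw [hD3]; exact ⟨_, fact h f⟩
    -- coprimality
    have hunit : IsUnit (GCDMonoid.gcd (GCDMonoid.gcd (f ^ k) (g ^ k)) (h ^ k)) := by
      by_contra hni
      have hne : GCDMonoid.gcd (GCDMonoid.gcd (f ^ k) (g ^ k)) (h ^ k) ≠ 0 :=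
        gcd_ne_zero_of_right (pow_ne_zero _ hh0)
      obtain ⟨p, hpirr, hpdvd⟩ := WfDvdMonoid.exists_irreducible_factor hni hne
      have hprime : Prime p := hpirr.prime
      have hpf : p ∣ f := hprime.dvd_of_dvd_pow
        ((hpdvd.trans (gcd_dvd_left _ _)).trans (gcd_dvd_left _ _))
      have hpg : p ∣ g := hprime.dvd_of_dvd_pow
        ((hpdvd.trans (gcd_dvd_left _ _)).trans (gcd_dvd_right _ _))
      have hph : p ∣ h := hprime.dvd_of_dvd_pow (hpdvd.trans (gcd_dvd_right _ _))
      have hp1 : p ∣ 1 := by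
        rw [← heq]
        exact dvd_add (dvd_add (dvd_pow hpf (by omega)) (dvd_pow hpg (by omega)))
          (dvd_pow hph (by omega))
      exact hpirr.not_isUnit (isUnit_of_dvd_one hp1)
    have hcopk : IsCoprime (GCDMonoid.gcd (f ^ k) (g ^ k)) (h ^ k) :=
      (gcd_isUnit_iff _ _).mp hunit
    have hdvd_all : f ^ k * g ^ k * h ^ k ∣ D :=
      key_dvd (pow_ne_zero _ hf0) (pow_ne_zero _ hg0) hcopk hdvd_fg hdvd_gh hdvd_hf
    -- lower bound on degree of D
    have hlow : k * (f.natDegree + g.natDegree + h.natDegree) ≤ D.natDegree := by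
      have h1 : ((f * g * h) ^ k).natDegree ≤ D.natDegree := by
        apply natDegree_le_of_dvd _ hD0
        rw [mul_pow, mul_pow]
        exact hdvd_all
      rwa [natDegree_pow, natDegree_mul (mul_ne_zero hf0 hg0) hh0,
        natDegree_mul hf0 hg0] at h1
    -- upper bounds
    have hup : ∀ p q : Polynomial ℂ, p ≠ 0 → q ≠ 0 → 1 ≤ p.natDegree → 1 ≤ q.natDegree →
        wronskian (derivative (p ^ (k+2))) (derivative (q ^ (k+2))) ≠ 0 →
        (wronskian (derivative (p ^ (k+2))) (derivative (q ^ (k+2)))).natDegree + 3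
          ≤ (k+2) * p.natDegree + (k+2) * q.natDegree := by
      intro p q hp0 hq0 hp1 hq1 hw0
      have b1 := natDegree_wronskian_lt_add hw0
      have b2 : (derivative (p ^ (k+2))).natDegree < (k+2) * p.natDegree := by
        have := natDegree_derivative_lt (hndpow p hp0 hp1)
        rwa [natDegree_pow] at this
      have b3 : (derivative (q ^ (k+2))).natDegree < (k+2) * q.natDegree := by
        have := natDegree_derivative_lt (hndpow q hq0 hq1)
        rwa [natDegree_pow] at this
      omega
    have u1 := hup f g hf0 hg0 ha hb (by rw [← hDdef]; exact hD0)
    have u2 := hup g h hg0 hh0 hb hc (by rw [← hD2]; exact hD0)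
    have u3 := hup h f hh0 hf0 hc ha (by rw [← hD3]; exact hD0)
    rw [← hDdef] at u1
    rw [← hD2] at u2
    rw [← hD3] at u3
    -- conclude
    nlinarith [hlow, u1, u2, u3, ha, hb, hc, hk]
end

section
/- Let f, g, h be non-constant meromorphic functions on ℂ satisfying f^n + g^m + h^k = 1 with min{n, m, k} ≥ 6 and with f^n, g^m, h^k linearly independent over ℂ, let D = W(f^n, g^m, h^k) be their Wronskian, and let z₀ ∈ ℂ be a zero or pole of at least one of f, g, h, with p, q, t the orders of f, g, h at z₀. If max{p, q, t} > 0 and min{p, q, t} < 0, then A(z₀) ≤ 3·1[p>0] + 3·1[q>0] + 3·1[t>0], where 1[·] denotes the indicator of the stated condition. -/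
/-- The order of a meromorphic function at a point: the exponent of the leading term of
the Laurent expansion (negative at a pole, positive at a zero, `0` otherwise; by
convention `0` if the function is not meromorphic at the point or vanishes identically
near it). -/
noncomputable def meroOrd (f : ℂ → ℂ) (z : ℂ) : ℤ :=
  open Classical in
  if h : MeromorphicAt f z then (meromorphicOrderAt f z).untopD 0 else 0

/-- The pole multiplicity `U(F, z₀) = max (−ord(F, z₀), 0)`. -/
noncomputable def poleMult (f : ℂ → ℂ) (z : ℂ) : ℕ := (-(meroOrd f z)).toNat

/-- The zero multiplicity `U(1/F, z₀) = max (ord(F, z₀), 0)`. -/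
noncomputable def zeroMult (f : ℂ → ℂ) (z : ℂ) : ℕ := (meroOrd f z).toNat

/-- The Wronskian `W(F₁, F₂, F₃)`: the determinant of the 3×3 matrix whose rows are
the functions, their first derivatives and their second derivatives. -/
noncomputable def wronskian3 (F₁ F₂ F₃ : ℂ → ℂ) (z : ℂ) : ℂ :=
  Matrix.det !![F₁ z, F₂ z, F₃ z;
                deriv F₁ z, deriv F₂ z, deriv F₃ z;
                deriv (deriv F₁) z, deriv (deriv F₂) z, deriv (deriv F₃) z]

/-- The quantity
`A(z₀) = 3(U(1/F₁) + U(1/F₂) + U(1/F₃)) + 3U(D) − 3U(1/D) − 2(U(F₁) + U(F₂) + U(F₃))`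
at `z₀`, where `D = W(F₁, F₂, F₃)`. -/
noncomputable def nevanA (F₁ F₂ F₃ : ℂ → ℂ) (z : ℂ) : ℤ :=
  3 * ((zeroMult F₁ z : ℤ) + (zeroMult F₂ z : ℤ) + (zeroMult F₃ z : ℤ))
    + 3 * (poleMult (wronskian3 F₁ F₂ F₃) z : ℤ)
    - 3 * (zeroMult (wronskian3 F₁ F₂ F₃) z : ℤ)
    - 2 * ((poleMult F₁ z : ℤ) + (poleMult F₂ z : ℤ) + (poleMult F₃ z : ℤ))

/-!
Write `F₁ = fⁿ`, `F₂ = gᵐ`, `F₃ = hᵏ`, with orders `a = n p`, `b = m q`, `c = k t` at `z₀`; each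
of them is `0` or at least `6` in absolute value. Since `F₁ + F₂ + F₃ = 1`, the Wronskian `D`
equals `F₁'F₂'' - F₂'F₁''` and its two cyclic variants, so `ord D ≥ max (a + b, b + c, c + a) - 3`.
Linear independence, propagated by the identity theorem over the connected set where `f, g, h`
are analytic, forbids `D` and the `Fᵢ` to vanish identically near `z₀`, so all these orders are
finite, and the bound on `A(z₀)` becomes integer arithmetic in `a, b, c, ord D`.
-/

open Filter Topology Set

theorem isPreconnected_of_mem_codiscrete {E : Type*} [NormedAddCommGroup E] [NormedSpace ℝ E]
    [LindelofSpace E] (hE : 1 < Module.rank ℝ E) {S : Set E} (hS : S ∈ codiscrete E) :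
    IsPreconnected S := by
  obtain ⟨hSo, hSd⟩ := mem_codiscrete'.1 hS
  have hc : Sᶜ.Countable := hSo.isClosed_compl.isLindelof.countable_of_isDiscrete hSd
  simpa using (hc.isConnected_compl_of_one_lt_rank hE).isPreconnected

theorem eventually_mem_nhdsNE_of_mem_codiscrete {X : Type*} [TopologicalSpace X] {T : Set X}
    (hT : T ∈ codiscrete X) (x : X) : ∀ᶠ z in 𝓝[≠] x, z ∈ T := by
  simpa using mem_codiscreteWithin_iff_forall_mem_nhdsNE.1 hT x (mem_univ x)

theorem exists_isOpen_nonempty_of_eventually_nhdsNE {X : Type*} [TopologicalSpace X] [T1Space X]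
    {x : X} [(𝓝[≠] x).NeBot] {p : X → Prop} (h : ∀ᶠ y in 𝓝[≠] x, p y) :
    ∃ U, IsOpen U ∧ U.Nonempty ∧ ∀ y ∈ U, p y := by
  obtain ⟨u, hu, hxu, hsub⟩ := mem_nhdsWithin.1 h
  exact ⟨u ∩ {x}ᶜ, hu.inter isOpen_compl_singleton,
    Filter.nonempty_of_mem (inter_mem (mem_nhdsWithin_of_mem_nhds (hu.mem_nhds hxu))
      self_mem_nhdsWithin), hsub⟩

theorem le_meromorphicOrderAt_deriv {𝕜 E : Type*} [NontriviallyNormedField 𝕜] [CharZero 𝕜]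
    [NormedAddCommGroup E] [NormedSpace 𝕜 E] [CompleteSpace E]
    {f : 𝕜 → E} {x : 𝕜} {n : ℤ} (hf : MeromorphicAt f x) (hn : n ≤ meromorphicOrderAt f x) :
    ((n - 1 : ℤ) : WithTop ℤ) ≤ meromorphicOrderAt (deriv f) x := by
  rcases eq_or_ne (meromorphicOrderAt f x) ⊤ with htop | hfin
  · rw [meromorphicOrderAt_eq_top_iff.2]
    · exact le_top
    have hf0 : f =ᶠ[𝓝[≠] x] 0 := meromorphicOrderAt_eq_top_iff.1 htop
    filter_upwards [hf0.nhdsNE_deriv] with z hz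
    simpa using hz
  lift meromorphicOrderAt f x to ℤ using hfin with m hm
  rcases eq_or_ne m 0 with rfl | hm0
  · obtain ⟨g, hg, -, hfg⟩ := (meromorphicOrderAt_eq_int_iff hf).1 hm.symm
    have hfg' : f =ᶠ[𝓝[≠] x] g := by filter_upwards [hfg] with z hz; simpa using hz
    rw [meromorphicOrderAt_congr hfg'.nhdsNE_deriv]
    have hn0 : n ≤ 0 := by exact_mod_cast hn
    exact le_trans (by exact_mod_cast (by omega : n - 1 ≤ 0)) hg.deriv.meromorphicOrderAt_nonneg
  · have hnm : n ≤ m := by exact_mod_cast hn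
    rw [meromorphicOrderAt_deriv_eq_sub_one (by exact_mod_cast hm0) hm.symm]
    exact_mod_cast (by omega : n - 1 ≤ m - 1)

theorem meroOrd_eq_untopD (f : ℂ → ℂ) (z : ℂ) :
    meroOrd f z = (meromorphicOrderAt f z).untopD 0 := by
  by_cases hf : MeromorphicAt f z <;> simp [meroOrd, hf]

theorem meromorphicOrderAt_eq_meroOrd {f : ℂ → ℂ} {z : ℂ} (h : meromorphicOrderAt f z ≠ ⊤) :
    meromorphicOrderAt f z = meroOrd f z := by
  rw [meroOrd_eq_untopD]
  lift meromorphicOrderAt f z to ℤ using h with d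
  rfl

theorem meroOrd_zpow {f : ℂ → ℂ} {z : ℂ} {n : ℤ} (hf : MeromorphicAt f z) (hn : n ≠ 0) :
    meroOrd (fun w => f w ^ n) z = n * meroOrd f z := by
  have hfn : meromorphicOrderAt (fun w => f w ^ n) z = n * meromorphicOrderAt f z :=
    meromorphicOrderAt_zpow hf
  rw [meroOrd_eq_untopD, meroOrd_eq_untopD, hfn]
  cases meromorphicOrderAt f z with
  | top => simp [WithTop.mul_top (WithTop.coe_ne_zero.2 hn)]
  | coe d => rfl

theorem eventuallyEq_of_eventually_hasDerivAt_zero {𝕜 G : Type*} [RCLike 𝕜]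
    [NormedAddCommGroup G] [NormedSpace 𝕜 G] {f : 𝕜 → G} {w : 𝕜}
    (h : ∀ᶠ z in 𝓝 w, HasDerivAt f 0 z) : f =ᶠ[𝓝 w] fun _ => f w := by
  obtain ⟨ε, hε, hball⟩ := Metric.eventually_nhds_iff_ball.1 h
  filter_upwards [Metric.ball_mem_nhds w hε] with z hz
  exact Metric.isOpen_ball.is_const_of_deriv_eq_zero (convex_ball w ε).isPreconnected
    (fun y hy => (hball y hy).differentiableAt.differentiableWithinAt)
    (fun y hy => (hball y hy).deriv) hz (Metric.mem_ball_self hε)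

theorem exists_eventually_linear_relation_of_wronskian_eq_zero {𝕜 : Type*} [RCLike 𝕜]
    {u v : 𝕜 → 𝕜} {U : Set 𝕜} (hU : IsOpen U) (hUne : U.Nonempty)
    (hu : DifferentiableOn 𝕜 u U) (hv : DifferentiableOn 𝕜 v U)
    (hW : ∀ z ∈ U, u z * deriv v z - v z * deriv u z = 0) :
    ∃ w ∈ U, ∃ α β : 𝕜, (α ≠ 0 ∨ β ≠ 0) ∧ ∀ᶠ z in 𝓝 w, α * u z + β * v z = 0 := by
  by_cases hu0 : ∀ z ∈ U, u z = 0
  · obtain ⟨w, hw⟩ := hUne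
    refine ⟨w, hw, 1, 0, Or.inl one_ne_zero, ?_⟩
    filter_upwards [hU.mem_nhds hw] with z hz
    simp [hu0 z hz]
  push Not at hu0
  obtain ⟨w, hw, huw⟩ := hu0
  have hu' : ∀ z ∈ U, DifferentiableAt 𝕜 u z := fun z hz => hu.differentiableAt (hU.mem_nhds hz)
  have hv' : ∀ z ∈ U, DifferentiableAt 𝕜 v z := fun z hz => hv.differentiableAt (hU.mem_nhds hz)
  have hnear : ∀ᶠ z in 𝓝 w, z ∈ U ∧ u z ≠ 0 :=
    (hU.eventually_mem hw).and ((hu' w hw).continuousAt.eventually_ne huw)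
  -- `(v / u)' = (u v' - v u') / u²`, so `v / u` is locally constant
  have hquot : ∀ᶠ z in 𝓝 w, HasDerivAt (fun y => v y / u y) 0 z := by
    filter_upwards [hnear] with z ⟨hz, huz⟩
    refine ((hv' z hz).hasDerivAt.div (hu' z hz).hasDerivAt huz).congr_deriv ?_
    rw [div_eq_zero_iff]
    exact Or.inl (by linear_combination hW z hz)
  refine ⟨w, hw, -(v w / u w), 1, Or.inr one_ne_zero, ?_⟩
  filter_upwards [eventuallyEq_of_eventually_hasDerivAt_zero hquot, hnear] with z hz ⟨_, huz⟩
  rw [div_eq_iff huz] at hz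
  linear_combination hz

theorem wronskian3_rotate (P Q R : ℂ → ℂ) : wronskian3 P Q R = wronskian3 Q R P := by
  funext z
  simp only [wronskian3, Matrix.det_fin_three, Matrix.of_apply, Matrix.cons_val',
    Matrix.cons_val_zero, Matrix.cons_val_one, Matrix.cons_val_two, Matrix.empty_val',
    Matrix.cons_val_fin_one, Matrix.head_cons, Matrix.tail_cons, Matrix.head_fin_const]
  ring

theorem wronskian3_eq_of_eventually_add_eq_one {P Q R : ℂ → ℂ} {z : ℂ}
    (hP : AnalyticAt ℂ P z) (hQ : AnalyticAt ℂ Q z) (hsum : ∀ᶠ y in 𝓝 z, P y + Q y + R y = 1) :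
    wronskian3 P Q R z = deriv P z * deriv (deriv Q) z - deriv Q z * deriv (deriv P) z := by
  have hR : R =ᶠ[𝓝 z] fun y => 1 - P y - Q y := by
    filter_upwards [hsum] with y hy
    linear_combination hy
  have hR' : deriv R =ᶠ[𝓝 z] fun y => -deriv P y - deriv Q y := by
    filter_upwards [hR.deriv, hP.eventually_analyticAt, hQ.eventually_analyticAt]
      with y hy hPy hQy
    rw [hy]
    exact ((((hasDerivAt_const y (1 : ℂ)).sub hPy.differentiableAt.hasDerivAt).sub
      hQy.differentiableAt.hasDerivAt).deriv).trans (by rw [zero_sub])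
  have hR'' : deriv (deriv R) z = -deriv (deriv P) z - deriv (deriv Q) z := by
    rw [hR'.deriv_eq]
    exact (hP.deriv.differentiableAt.hasDerivAt.neg.sub hQ.deriv.differentiableAt.hasDerivAt).deriv
  simp only [wronskian3, Matrix.det_fin_three, Matrix.of_apply, Matrix.cons_val',
    Matrix.cons_val_zero, Matrix.cons_val_one, Matrix.cons_val_two, Matrix.empty_val',
    Matrix.cons_val_fin_one, Matrix.head_cons, Matrix.tail_cons, Matrix.head_fin_const,
    hR.eq_of_nhds, hR'.eq_of_nhds, hR'']
  ring

theorem le_meromorphicOrderAt_wronskian3 {P Q R : ℂ → ℂ} {z₀ : ℂ} {a b : ℤ}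
    (hP : MeromorphicAt P z₀) (hQ : MeromorphicAt Q z₀)
    (hsum : ∀ᶠ z in 𝓝[≠] z₀, P z + Q z + R z = 1)
    (ha : a ≤ meromorphicOrderAt P z₀) (hb : b ≤ meromorphicOrderAt Q z₀) :
    ((a + b - 3 : ℤ) : WithTop ℤ) ≤ meromorphicOrderAt (wronskian3 P Q R) z₀ := by
  have hW : wronskian3 P Q R =ᶠ[𝓝[≠] z₀]
      deriv P * deriv (deriv Q) + -(deriv Q * deriv (deriv P)) := by
    filter_upwards [hP.eventually_analyticAt, hQ.eventually_analyticAt,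
      eventually_nhdsNE_eventually_nhds_iff.2 hsum] with z hPz hQz hz
    simpa [← sub_eq_add_neg] using wronskian3_eq_of_eventually_add_eq_one hPz hQz hz
  have hP₁ := le_meromorphicOrderAt_deriv hP ha
  have hP₂ := le_meromorphicOrderAt_deriv hP.deriv hP₁
  have hQ₁ := le_meromorphicOrderAt_deriv hQ hb
  have hQ₂ := le_meromorphicOrderAt_deriv hQ.deriv hQ₁
  rw [meromorphicOrderAt_congr hW]
  refine le_trans (le_min ?_ ?_)
    (meromorphicOrderAt_add (hP.deriv.mul hQ.deriv.deriv) (hQ.deriv.mul hP.deriv.deriv).neg)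
  · rw [meromorphicOrderAt_mul hP.deriv hQ.deriv.deriv]
    exact le_trans (by norm_cast; omega) (add_le_add hP₁ hQ₂)
  · rw [← meromorphicOrderAt_neg, meromorphicOrderAt_mul hQ.deriv hP.deriv.deriv]
    exact le_trans (by norm_cast; omega) (add_le_add hQ₁ hP₂)

section LinearlyIndependentOnCodiscrete

variable {P Q R : ℂ → ℂ} {T : Set ℂ}

theorem eq_zero_of_eventually_linear_relation (hT : T ∈ codiscrete ℂ)
    (hPT : AnalyticOnNhd ℂ P T) (hQT : AnalyticOnNhd ℂ Q T) (hRT : AnalyticOnNhd ℂ R T)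
    (hind : ∀ a b c : ℂ, (∀ z ∈ T, a * P z + b * Q z + c * R z = 0) → a = 0 ∧ b = 0 ∧ c = 0)
    {a b c w : ℂ} (hw : w ∈ T) (hrel : ∀ᶠ z in 𝓝 w, a * P z + b * Q z + c * R z = 0) :
    a = 0 ∧ b = 0 ∧ c = 0 := by
  have hφ : AnalyticOnNhd ℂ (fun z => a * P z + b * Q z + c * R z) T := fun z hz =>
    ((analyticAt_const.mul (hPT z hz)).add (analyticAt_const.mul (hQT z hz))).add
      (analyticAt_const.mul (hRT z hz))
  have hTconn : IsPreconnected T :=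
    isPreconnected_of_mem_codiscrete (by rw [Complex.rank_real_complex]; norm_num) hT
  exact hind a b c fun z hz => hφ.eqOn_zero_of_preconnected_of_eventuallyEq_zero hTconn hw hrel hz

theorem eq_zero_of_eventually_nhdsNE_linear_relation (hT : T ∈ codiscrete ℂ)
    (hPT : AnalyticOnNhd ℂ P T) (hQT : AnalyticOnNhd ℂ Q T) (hRT : AnalyticOnNhd ℂ R T)
    (hind : ∀ a b c : ℂ, (∀ z ∈ T, a * P z + b * Q z + c * R z = 0) → a = 0 ∧ b = 0 ∧ c = 0)
    {a b c z₀ : ℂ} (hrel : ∀ᶠ z in 𝓝[≠] z₀, a * P z + b * Q z + c * R z = 0) :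
    a = 0 ∧ b = 0 ∧ c = 0 := by
  obtain ⟨U, hU, ⟨w, hw⟩, hUrel⟩ := exists_isOpen_nonempty_of_eventually_nhdsNE
    ((eventually_mem_nhdsNE_of_mem_codiscrete hT z₀).and hrel)
  refine eq_zero_of_eventually_linear_relation hT hPT hQT hRT hind (hUrel w hw).1 ?_
  filter_upwards [hU.mem_nhds hw] with z hz using (hUrel z hz).2

theorem meromorphicOrderAt_ne_top_of_linearIndependentOn (hT : T ∈ codiscrete ℂ)
    (hPT : AnalyticOnNhd ℂ P T) (hQT : AnalyticOnNhd ℂ Q T) (hRT : AnalyticOnNhd ℂ R T)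
    (hind : ∀ a b c : ℂ, (∀ z ∈ T, a * P z + b * Q z + c * R z = 0) → a = 0 ∧ b = 0 ∧ c = 0)
    (z₀ : ℂ) :
    meromorphicOrderAt P z₀ ≠ ⊤ ∧ meromorphicOrderAt Q z₀ ≠ ⊤ ∧ meromorphicOrderAt R z₀ ≠ ⊤ := by
  have hrel := fun a b c => eq_zero_of_eventually_nhdsNE_linear_relation hT hPT hQT hRT hind
    (a := a) (b := b) (c := c) (z₀ := z₀)
  refine ⟨fun htop => ?_, fun htop => ?_, fun htop => ?_⟩ <;>
    have h0 := meromorphicOrderAt_eq_top_iff.1 htop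
  · exact one_ne_zero (hrel 1 0 0 (by simpa using h0)).1
  · exact one_ne_zero (hrel 0 1 0 (by simpa using h0)).2.1
  · exact one_ne_zero (hrel 0 0 1 (by simpa using h0)).2.2

theorem eq_zero_of_eventually_deriv_linear_relation (hT : T ∈ codiscrete ℂ)
    (hPT : AnalyticOnNhd ℂ P T) (hQT : AnalyticOnNhd ℂ Q T) (hRT : AnalyticOnNhd ℂ R T)
    (hsum : ∀ z ∈ T, P z + Q z + R z = 1)
    (hind : ∀ a b c : ℂ, (∀ z ∈ T, a * P z + b * Q z + c * R z = 0) → a = 0 ∧ b = 0 ∧ c = 0)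
    {α β w : ℂ} (hw : w ∈ T) (hrel : ∀ᶠ z in 𝓝 w, α * deriv Q z + β * deriv R z = 0) :
    α = 0 ∧ β = 0 := by
  have hTw : T ∈ 𝓝 w := (mem_codiscrete'.1 hT).1.mem_nhds hw
  have hderiv : ∀ᶠ z in 𝓝 w, HasDerivAt (fun y => α * Q y + β * R y) 0 z := by
    filter_upwards [hTw, hrel] with z hz hz'
    exact (((hQT z hz).differentiableAt.hasDerivAt.const_mul α).add
      ((hRT z hz).differentiableAt.hasDerivAt.const_mul β)).congr_deriv hz'
  set γ := α * Q w + β * R w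
  -- near `w`, `α Q + β R = γ = γ (P + Q + R)`
  obtain ⟨hγ, hα, hβ⟩ := eq_zero_of_eventually_linear_relation hT hPT hQT hRT hind
    (a := -γ) (b := α - γ) (c := β - γ) hw (by
      filter_upwards [eventuallyEq_of_eventually_hasDerivAt_zero hderiv, hTw] with z hz hzT
      linear_combination hz - γ * hsum z hzT)
  rw [neg_eq_zero.1 hγ, sub_zero] at hα hβ
  exact ⟨hα, hβ⟩

theorem meromorphicOrderAt_wronskian3_ne_top (hT : T ∈ codiscrete ℂ)
    (hPT : AnalyticOnNhd ℂ P T) (hQT : AnalyticOnNhd ℂ Q T) (hRT : AnalyticOnNhd ℂ R T)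
    (hsum : ∀ z ∈ T, P z + Q z + R z = 1)
    (hind : ∀ a b c : ℂ, (∀ z ∈ T, a * P z + b * Q z + c * R z = 0) → a = 0 ∧ b = 0 ∧ c = 0)
    (z₀ : ℂ) : meromorphicOrderAt (wronskian3 P Q R) z₀ ≠ ⊤ := by
  intro htop
  obtain ⟨U, hU, hUne, hUW⟩ := exists_isOpen_nonempty_of_eventually_nhdsNE
    ((eventually_mem_nhdsNE_of_mem_codiscrete hT z₀).and (meromorphicOrderAt_eq_top_iff.1 htop))
  have hwronskian : ∀ z ∈ U,
      deriv Q z * deriv (deriv R) z - deriv R z * deriv (deriv Q) z = 0 := by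
    intro z hz
    obtain ⟨hzT, hWz⟩ := hUW z hz
    have hsum' : ∀ᶠ y in 𝓝 z, Q y + R y + P y = 1 := by
      filter_upwards [(mem_codiscrete'.1 hT).1.mem_nhds hzT] with y hy
      linear_combination hsum y hy
    rw [← wronskian3_eq_of_eventually_add_eq_one (hQT z hzT) (hRT z hzT) hsum',
      ← wronskian3_rotate, hWz]
  obtain ⟨w, hw, α, β, hαβ, hrel⟩ := exists_eventually_linear_relation_of_wronskian_eq_zero hU hUne
    (fun z hz => (hQT z (hUW z hz).1).deriv.differentiableAt.differentiableWithinAt)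
    (fun z hz => (hRT z (hUW z hz).1).deriv.differentiableAt.differentiableWithinAt) hwronskian
  obtain ⟨hα, hβ⟩ :=
    eq_zero_of_eventually_deriv_linear_relation hT hPT hQT hRT hsum hind (hUW w hw).1 hrel
  exact hαβ.elim (· hα) (· hβ)

theorem le_meroOrd_wronskian3 (hT : T ∈ codiscrete ℂ)
    (hPT : AnalyticOnNhd ℂ P T) (hQT : AnalyticOnNhd ℂ Q T) (hRT : AnalyticOnNhd ℂ R T)
    (hsum : ∀ z ∈ T, P z + Q z + R z = 1)
    (hind : ∀ a b c : ℂ, (∀ z ∈ T, a * P z + b * Q z + c * R z = 0) → a = 0 ∧ b = 0 ∧ c = 0)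
    {z₀ : ℂ} (hP : MeromorphicAt P z₀) (hQ : MeromorphicAt Q z₀) (hR : MeromorphicAt R z₀) :
    meroOrd P z₀ + meroOrd Q z₀ - 3 ≤ meroOrd (wronskian3 P Q R) z₀ ∧
      meroOrd Q z₀ + meroOrd R z₀ - 3 ≤ meroOrd (wronskian3 P Q R) z₀ ∧
      meroOrd R z₀ + meroOrd P z₀ - 3 ≤ meroOrd (wronskian3 P Q R) z₀ := by
  obtain ⟨hPt, hQt, hRt⟩ :=
    meromorphicOrderAt_ne_top_of_linearIndependentOn hT hPT hQT hRT hind z₀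
  have hW := meromorphicOrderAt_eq_meroOrd
    (meromorphicOrderAt_wronskian3_ne_top hT hPT hQT hRT hsum hind z₀)
  have hsum' : ∀ᶠ z in 𝓝[≠] z₀, P z + Q z + R z = 1 :=
    (eventually_mem_nhdsNE_of_mem_codiscrete hT z₀).mono hsum
  have hPQ := le_meromorphicOrderAt_wronskian3 hP hQ hsum'
    (meromorphicOrderAt_eq_meroOrd hPt).ge (meromorphicOrderAt_eq_meroOrd hQt).ge
  have hQR := le_meromorphicOrderAt_wronskian3 (R := P) hQ hR
    (hsum'.mono fun z hz => by linear_combination hz)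
    (meromorphicOrderAt_eq_meroOrd hQt).ge (meromorphicOrderAt_eq_meroOrd hRt).ge
  have hRP := le_meromorphicOrderAt_wronskian3 (R := Q) hR hP
    (hsum'.mono fun z hz => by linear_combination hz)
    (meromorphicOrderAt_eq_meroOrd hRt).ge (meromorphicOrderAt_eq_meroOrd hPt).ge
  rw [← wronskian3_rotate] at hQR
  rw [← wronskian3_rotate, ← wronskian3_rotate] at hRP
  rw [hW] at hPQ hQR hRP
  exact ⟨by exact_mod_cast hPQ, by exact_mod_cast hQR, by exact_mod_cast hRP⟩

end LinearlyIndependentOnCodiscrete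

theorem nevanA_arith {n m k p q t d : ℤ} (hn : 6 ≤ n) (hm : 6 ≤ m) (hk : 6 ≤ k)
    (hmax : 0 < max p (max q t)) (hmin : min p (min q t) < 0)
    (hpq : n * p + m * q - 3 ≤ d) (hqt : m * q + k * t - 3 ≤ d) (htp : k * t + n * p - 3 ≤ d) :
    3 * (((n * p).toNat : ℤ) + ((m * q).toNat : ℤ) + ((k * t).toNat : ℤ))
        + 3 * ((-d).toNat : ℤ) - 3 * (d.toNat : ℤ)
        - 2 * (((-(n * p)).toNat : ℤ) + ((-(m * q)).toNat : ℤ) + ((-(k * t)).toNat : ℤ)) ≤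
      3 * (if 0 < p then 1 else 0) + 3 * (if 0 < q then 1 else 0)
        + 3 * (if 0 < t then 1 else 0) := by
  have sign : ∀ {n : ℤ} (p : ℤ), 6 ≤ n →
      (p = 0 ∧ n * p = 0) ∨ (0 < p ∧ 6 ≤ n * p) ∨ (p < 0 ∧ n * p ≤ -6) := by
    intro n p hn
    rcases lt_trichotomy p 0 with hp | rfl | hp
    · exact Or.inr (Or.inr ⟨hp, by nlinarith⟩)
    · simp
    · exact Or.inr (Or.inl ⟨hp, by nlinarith⟩)
  have hp := sign p hn
  have hq := sign q hm
  have ht := sign t hk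
  generalize n * p = a at *
  generalize m * q = b at *
  generalize k * t = c at *
  split_ifs <;> omega

theorem nevanA_bound_of_max_pos_min_neg_general
    (f g h : ℂ → ℂ) (n m k : ℤ) (z₀ : ℂ)
    (hf : MeromorphicOn f Set.univ) (hg : MeromorphicOn g Set.univ)
    (hh : MeromorphicOn h Set.univ)
    (hmin : 6 ≤ min n (min m k))
    (heq : ∀ z : ℂ, AnalyticAt ℂ f z → AnalyticAt ℂ g z → AnalyticAt ℂ h z →
      f z ^ n + g z ^ m + h z ^ k = 1)
    (hind : ∀ a b c : ℂ,
      (∀ z : ℂ, AnalyticAt ℂ f z → AnalyticAt ℂ g z → AnalyticAt ℂ h z →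
        a * f z ^ n + b * g z ^ m + c * h z ^ k = 0) →
      a = 0 ∧ b = 0 ∧ c = 0)
    (p q t : ℤ) (hp : p = meroOrd f z₀) (hq : q = meroOrd g z₀) (ht : t = meroOrd h z₀)
    (hmaxpqt : 0 < max p (max q t)) (hminpqt : min p (min q t) < 0) :
    nevanA (fun z => f z ^ n) (fun z => g z ^ m) (fun z => h z ^ k) z₀ ≤
      3 * (if 0 < p then 1 else 0) + 3 * (if 0 < q then 1 else 0)
        + 3 * (if 0 < t then 1 else 0) := by
  have hn : 6 ≤ n := by omega
  have hm : 6 ≤ m := by omega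
  have hk : 6 ≤ k := by omega
  set T : Set ℂ := {z | AnalyticAt ℂ f z ∧ AnalyticAt ℂ g z ∧ AnalyticAt ℂ h z}
  have hT : T ∈ codiscrete ℂ := inter_mem hf.analyticAt_mem_codiscreteWithin
    (inter_mem hg.analyticAt_mem_codiscreteWithin hh.analyticAt_mem_codiscreteWithin)
  have hfz := hf z₀ (mem_univ z₀)
  have hgz := hg z₀ (mem_univ z₀)
  have hhz := hh z₀ (mem_univ z₀)
  obtain ⟨hpq, hqt, htp⟩ := le_meroOrd_wronskian3 (P := fun z => f z ^ n)
    (Q := fun z => g z ^ m) (R := fun z => h z ^ k) hT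
    (fun z hz => hz.1.zpow_nonneg (by omega)) (fun z hz => hz.2.1.zpow_nonneg (by omega))
    (fun z hz => hz.2.2.zpow_nonneg (by omega)) (fun z hz => heq z hz.1 hz.2.1 hz.2.2)
    (fun a b c hrel => hind a b c fun z h₁ h₂ h₃ => hrel z ⟨h₁, h₂, h₃⟩)
    (hfz.zpow n) (hgz.zpow m) (hhz.zpow k)
  have hF : meroOrd (fun z => f z ^ n) z₀ = n * p := by rw [hp, meroOrd_zpow hfz (by omega)]
  have hG : meroOrd (fun z => g z ^ m) z₀ = m * q := by rw [hq, meroOrd_zpow hgz (by omega)]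
  have hH : meroOrd (fun z => h z ^ k) z₀ = k * t := by rw [ht, meroOrd_zpow hhz (by omega)]
  simp only [nevanA, zeroMult, poleMult, hF, hG, hH] at hpq hqt htp ⊢
  exact nevanA_arith hn hm hk hmaxpqt hminpqt hpq hqt htp

/-- **Lemma 2.7.** Under the standing hypotheses (meromorphic non-constant `f, g, h`
with `f^n + g^m + h^k = 1`, `min {n,m,k} ≥ 6`, `f^n, g^m, h^k` linearly independent),
let `z₀` be a zero or pole of at least one of `f, g, h` and let `p, q, t` be the
orders of `f, g, h` at `z₀`. If `max {p,q,t} > 0` and `min {p,q,t} < 0`, then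
`A(z₀) ≤ 3·1[p>0] + 3·1[q>0] + 3·1[t>0]`. -/
theorem nevanA_bound_of_max_pos_min_neg
    (f g h : ℂ → ℂ) (n m k : ℤ) (z₀ : ℂ)
    (hf : MeromorphicOn f Set.univ) (hg : MeromorphicOn g Set.univ)
    (hh : MeromorphicOn h Set.univ)
    (hfc : ¬ ∃ c : ℂ, ∀ z : ℂ, AnalyticAt ℂ f z → f z = c)
    (hgc : ¬ ∃ c : ℂ, ∀ z : ℂ, AnalyticAt ℂ g z → g z = c)
    (hhc : ¬ ∃ c : ℂ, ∀ z : ℂ, AnalyticAt ℂ h z → h z = c)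
    (hmin : 6 ≤ min n (min m k))
    (heq : ∀ z : ℂ, AnalyticAt ℂ f z → AnalyticAt ℂ g z → AnalyticAt ℂ h z →
      f z ^ n + g z ^ m + h z ^ k = 1)
    (hind : ∀ a b c : ℂ,
      (∀ z : ℂ, AnalyticAt ℂ f z → AnalyticAt ℂ g z → AnalyticAt ℂ h z →
        a * f z ^ n + b * g z ^ m + c * h z ^ k = 0) →
      a = 0 ∧ b = 0 ∧ c = 0)
    (p q t : ℤ) (hp : p = meroOrd f z₀) (hq : q = meroOrd g z₀) (ht : t = meroOrd h z₀)
    (hzp : p ≠ 0 ∨ q ≠ 0 ∨ t ≠ 0)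
    (hmaxpqt : 0 < max p (max q t)) (hminpqt : min p (min q t) < 0) :
    nevanA (fun z => f z ^ n) (fun z => g z ^ m) (fun z => h z ^ k) z₀ ≤
      3 * (if 0 < p then 1 else 0) + 3 * (if 0 < q then 1 else 0)
        + 3 * (if 0 < t then 1 else 0) :=
  nevanA_bound_of_max_pos_min_neg_general f g h n m k z₀ hf hg hh hmin heq hind p q t hp hq ht
    hmaxpqt hminpqt
end
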